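/- arXiv:1803.09619 — 9 statements merged into one kernel-verified Lean document; each statement's English description precedes it below -/
import Mathlib

section
/- Let C be an isomorphism-invariant set of interpretations of L on X and let τ be a maximal element of C with respect to ⊆, or a minimal element of C with respect to ⊆. Then τ is a reversible interpretation. -/
/-- An interpretation on a set `X` of a relational language whose relation symbols are
indexed by `I`, the symbol `i` having arity `ar i`. -/
def Interp {I : Type*} (ar : I → ℕ) (X : Type*) : Type _ :=
  ∀ i : I, Set (Fin (ar i) → X)

namespace Interp

variable {I : Type*} {ar : I → ℕ} {X : Type*}

/-- `ρ ⊆ σ`: every relation of `ρ` is contained in the corresponding relation of `σ`. -/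
def le (ρ σ : Interp ar X) : Prop := ∀ i, ρ i ⊆ σ i

/-- The image `g[ρ]` of an interpretation under a bijection `g` of `X`:
`r(x)` holds in `g[ρ]` iff `r(g⁻¹ ∘ x)` holds in `ρ`. -/
def img (g : X ≃ X) (ρ : Interp ar X) : Interp ar X :=
  fun i => {x | (fun k => g.symm (x k)) ∈ ρ i}

/-- A set of interpretations is isomorphism-invariant iff it is closed under
images by bijections of `X`. -/
def IsoInvariant (C : Set (Interp ar X)) : Prop :=
  ∀ ρ ∈ C, ∀ g : X ≃ X, img g ρ ∈ C

/-- An interpretation is reversible iff every bijective homomorphism from it to itself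
is an automorphism. -/
def Reversible (ρ : Interp ar X) : Prop :=
  ∀ f : X ≃ X,
    (∀ i, ∀ x ∈ ρ i, (fun k => f (x k)) ∈ ρ i) →
    ∀ i, ∀ x : Fin (ar i) → X, x ∈ ρ i ↔ (fun k => f (x k)) ∈ ρ i

/-- `τ` is a maximal element of `C` with respect to `⊆`. -/
def MaxIn (C : Set (Interp ar X)) (τ : Interp ar X) : Prop :=
  τ ∈ C ∧ ¬∃ σ ∈ C, le τ σ ∧ τ ≠ σ

/-- `τ` is a minimal element of `C` with respect to `⊆`. -/
def MinIn (C : Set (Interp ar X)) (τ : Interp ar X) : Prop :=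
  τ ∈ C ∧ ¬∃ σ ∈ C, le σ τ ∧ σ ≠ τ

end Interp

/-!
A bijective endomorphism `f` of `τ` is exactly a bijection with `τ ⊆ f⁻¹[τ]`, equivalently
`f[τ] ⊆ τ`. Both images lie in `C` by isomorphism invariance, so maximality (resp. minimality)
of `τ` forces equality, which says that `f` is an automorphism.
-/

namespace Interp

variable {I : Type*} {ar : I → ℕ} {X : Type*}

theorem mem_img_symm {g : X ≃ X} {ρ : Interp ar X} {i : I} {x : Fin (ar i) → X} :
    x ∈ img g.symm ρ i ↔ (fun k => g (x k)) ∈ ρ i :=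
  Iff.rfl

theorem img_symm_img (g : X ≃ X) (ρ : Interp ar X) : img g.symm (img g ρ) = ρ := by
  funext i
  ext x
  simp only [img, Set.mem_ofPred_eq, Equiv.symm_symm, Equiv.symm_apply_apply]

theorem le_img_symm_iff_img_le {g : X ≃ X} {ρ σ : Interp ar X} :
    le ρ (img g.symm σ) ↔ le (img g ρ) σ := by
  constructor
  · intro h i x hx
    simpa only [Equiv.apply_symm_apply] using mem_img_symm.1 (h i hx)
  · intro h i x hx
    refine mem_img_symm.2 (h i ?_)
    simpa only [img, Set.mem_ofPred_eq, Equiv.symm_apply_apply] using hx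

theorem reversible_iff {ρ : Interp ar X} :
    Reversible ρ ↔ ∀ f : X ≃ X, le ρ (img f.symm ρ) → img f.symm ρ = ρ := by
  refine forall_congr' fun f => imp_congr Iff.rfl ⟨fun h => ?_, fun h i x => ?_⟩
  · funext i
    ext x
    exact (h i x).symm
  · rw [← mem_img_symm, h]

theorem MaxIn.reversible {C : Set (Interp ar X)} {τ : Interp ar X} (hC : IsoInvariant C)
    (hτ : MaxIn C τ) : Reversible τ :=
  reversible_iff.2 fun f hf => by_contra fun hne =>
    hτ.2 ⟨_, hC τ hτ.1 f.symm, hf, Ne.symm hne⟩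

theorem MinIn.reversible {C : Set (Interp ar X)} {τ : Interp ar X} (hC : IsoInvariant C)
    (hτ : MinIn C τ) : Reversible τ := by
  refine reversible_iff.2 fun f hf => ?_
  have himg : img f τ = τ := by_contra fun hne =>
    hτ.2 ⟨_, hC τ hτ.1 f, le_img_symm_iff_img_le.1 hf, hne⟩
  simpa only [himg] using img_symm_img f τ

end Interp

theorem stmt_0_general {I : Type*} {ar : I → ℕ} {X : Type*}
    (C : Set (Interp ar X)) (hC : Interp.IsoInvariant C)
    (τ : Interp ar X) (hτ : Interp.MaxIn C τ ∨ Interp.MinIn C τ) :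
    Interp.Reversible τ :=
  hτ.elim (·.reversible hC) (·.reversible hC)

/-- If `C` is an isomorphism-invariant set of interpretations of a relational language on a
nonempty set `X` and `τ` is a maximal or a minimal element of `C` with respect to `⊆`,
then `τ` is a reversible interpretation. -/
theorem stmt_0 {I : Type*} {ar : I → ℕ} {X : Type*} [Nonempty X]
    (C : Set (Interp ar X)) (hC : Interp.IsoInvariant C)
    (τ : Interp ar X) (hτ : Interp.MaxIn C τ ∨ Interp.MinIn C τ) :
    Interp.Reversible τ :=
  stmt_0_general C hC τ hτ
end

section
/- Let X be a nonempty set and ρ ⊆ X × X a binary relation such that for every bijection g : X → X and all x, y ∈ X one has (x, y) ∈ ρ if and only if (g(x), g(y)) ∈ ρ. Then ρ is one of the following four relations: the empty relation ∅, the diagonal Δ_X = {(x, x) : x ∈ X}, the complement of the diagonal X² ∖ Δ_X, or the full relation X². Conversely, each of these four relations is invariant under all bijections of X. -/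
/-!
Permutations act `2`-transitively, so any pair can be moved onto any other pair that is
diagonal exactly when it is. Whether `(x, y) ∈ ρ` therefore depends only on whether `x = y`,
which leaves the four relations.
-/

open MulAction

section

variable {X : Type*}

def IsPermInvariant (ρ : Set (X × X)) : Prop :=
  ∀ g : Equiv.Perm X, ∀ x y, (x, y) ∈ ρ → (g x, g y) ∈ ρ

namespace IsPermInvariant

variable {ρ : Set (X × X)}

theorem mem_of_mem (hρ : IsPermInvariant ρ) {a b c d : X} (hmem : (a, b) ∈ ρ)
    (hab : a = b ↔ c = d) : (c, d) ∈ ρ := by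
  by_cases hcd : c = d
  · obtain rfl := hab.mpr hcd
    subst hcd
    obtain ⟨g, rfl⟩ := exists_smul_eq (Equiv.Perm X) a c
    exact hρ g a a hmem
  · obtain ⟨g, rfl, rfl⟩ :=
      is_two_pretransitive_iff.mp (Equiv.Perm.isMultiplyPretransitive X 2) (mt hab.mp hcd) hcd
    exact hρ g a b hmem

theorem exists_eq_setOf (hρ : IsPermInvariant ρ) :
    ∃ D O : Prop, ρ = {p | p.1 = p.2 ∧ D ∨ p.1 ≠ p.2 ∧ O} := by
  refine ⟨∃ a, (a, a) ∈ ρ, ∃ a b, a ≠ b ∧ (a, b) ∈ ρ, Set.ext fun ⟨x, y⟩ => ⟨fun h => ?_, ?_⟩⟩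
  · by_cases hxy : x = y
    · exact .inl ⟨hxy, x, hxy ▸ h⟩
    · exact .inr ⟨hxy, x, y, hxy, h⟩
  · rintro (⟨hxy, a, ha⟩ | ⟨hxy, a, b, hab, h⟩)
    · exact hρ.mem_of_mem ha (iff_of_true rfl hxy)
    · exact hρ.mem_of_mem h (iff_of_false hab hxy)

end IsPermInvariant

end

theorem stmt_8_general {X : Type*} (ρ : Set (X × X)) :
    (∀ g : X ≃ X, ∀ x y : X, (x, y) ∈ ρ ↔ (g x, g y) ∈ ρ) ↔
      (ρ = ∅ ∨ ρ = {p : X × X | p.1 = p.2} ∨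
        ρ = {p : X × X | p.1 ≠ p.2} ∨ ρ = Set.univ) := by
  constructor
  · intro h
    obtain ⟨D, O, rfl⟩ := IsPermInvariant.exists_eq_setOf fun g x y => (h g x y).mp
    by_cases hD : D <;> by_cases hO : O <;> simp [hD, hO, em]
  · rintro (rfl | rfl | rfl | rfl) g x y <;> simp [g.injective.eq_iff]

/-- A binary relation `ρ` on a nonempty set `X` is invariant under all bijections of `X`
(i.e. strongly reversible) if and only if `ρ` is the empty relation, the diagonal, the
complement of the diagonal, or the full relation. -/
theorem stmt_8 {X : Type*} [Nonempty X] (ρ : Set (X × X)) :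
    (∀ g : X ≃ X, ∀ x y : X, (x, y) ∈ ρ ↔ (g x, g y) ∈ ρ) ↔
      (ρ = ∅ ∨ ρ = {p : X × X | p.1 = p.2} ∨
        ρ = {p : X × X | p.1 ≠ p.2} ∨ ρ = Set.univ) :=
  stmt_8_general ρ
end

section
/- Let n ≥ 3, let G be a maximal K_n-free simple graph on a vertex set X, and suppose X has at least n − 1 elements. Then for every vertex x ∈ X there exists a set K of n − 2 vertices of X, none equal to x, such that {x} ∪ K is a clique of size n − 1 in G (x is adjacent to every vertex of K, and the vertices of K are pairwise adjacent). -/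
/-!
Write `n = m + 1`. Adding a missing edge `xy` to a maximal `K_{m+1}`-free graph creates an
`(m+1)`-clique through `x` and `y`, so `x` lies in an `m`-clique of `G`. Some `m`-clique `s`
exists: from a missing edge if `G` is not complete, and from any `m` vertices otherwise.
Since `s ∪ {x}` is not a clique, either `x ∈ s` or `x` misses a vertex of `s`; in both
cases `x` lies in an `m`-clique.
-/

open Finset SimpleGraph

namespace SimpleGraph

variable {X : Type*} {G : SimpleGraph X} {m : ℕ}

theorem maximal_cliqueFree_iff {n : ℕ} :
    Maximal (fun H : SimpleGraph X ↦ H.CliqueFree n) G ↔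
      G.CliqueFree n ∧ ¬∃ H : SimpleGraph X, H.CliqueFree n ∧ G < H := by
  simp only [maximal_iff_forall_gt, not_exists, not_and]
  exact and_congr_right fun _ ↦ ⟨fun h H hH hlt ↦ h hlt hH, fun h _ hlt hH ↦ h _ hH hlt⟩

theorem exists_isNClique_mem_of_maximal_cliqueFree_not_adj
    (h : Maximal (fun H : SimpleGraph X ↦ H.CliqueFree (m + 1)) G) {x y : X} (hne : x ≠ y)
    (hxy : ¬G.Adj x y) : ∃ s, x ∈ s ∧ G.IsNClique m s := by
  classical
  obtain ⟨t, -, -, ht, -⟩ := exists_of_maximal_cliqueFree_not_adj h hne hxy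
  exact ⟨insert x t, mem_insert_self x t, ht⟩

theorem exists_isNClique_of_maximal_cliqueFree
    (h : Maximal (fun H : SimpleGraph X ↦ H.CliqueFree (m + 1)) G)
    (hcard : (m : Cardinal) ≤ Cardinal.mk X) : ∃ s, G.IsNClique m s := by
  by_cases htop : G = ⊤
  · obtain ⟨S, hS⟩ := Cardinal.exists_finset_le_card X m hcard
    obtain ⟨s, -, hs⟩ := exists_subset_card_eq hS
    exact ⟨s, htop ▸ IsClique.top _, hs⟩
  · obtain ⟨x, y, hne, hxy⟩ := ne_top_iff_exists_not_adj.mp htop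
    obtain ⟨s, -, hs⟩ := exists_isNClique_mem_of_maximal_cliqueFree_not_adj h hne hxy
    exact ⟨s, hs⟩

theorem exists_isNClique_mem_of_maximal_cliqueFree
    (h : Maximal (fun H : SimpleGraph X ↦ H.CliqueFree (m + 1)) G)
    (hcard : (m : Cardinal) ≤ Cardinal.mk X) (x : X) : ∃ s, x ∈ s ∧ G.IsNClique m s := by
  obtain ⟨s, hs⟩ := exists_isNClique_of_maximal_cliqueFree h hcard
  obtain ⟨y, hys, hxy⟩ := hs.exists_not_adj_of_cliqueFree_succ h.prop x
  by_cases hyx : x = y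
  · exact ⟨s, hyx ▸ hys, hs⟩
  · exact exists_isNClique_mem_of_maximal_cliqueFree_not_adj h hyx hxy

end SimpleGraph

theorem stmt_11_general {X : Type*} {n : ℕ} (G : SimpleGraph X)
    (hfree : G.CliqueFree n)
    (hmax : ¬∃ H : SimpleGraph X, H.CliqueFree n ∧ G < H)
    (hcard : (↑(n - 1) : Cardinal) ≤ Cardinal.mk X) :
    ∀ x : X, ∃ K : Finset X, x ∉ K ∧ K.card = n - 2 ∧
      (∀ y ∈ K, G.Adj x y) ∧ ∀ a ∈ K, ∀ b ∈ K, a ≠ b → G.Adj a b := by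
  classical
  intro x
  obtain ⟨m, rfl⟩ : ∃ m, n = m + 1 :=
    Nat.exists_eq_add_one.mpr (Nat.pos_of_ne_zero fun h ↦ not_cliqueFree_zero (h ▸ hfree))
  obtain ⟨s, hxs, hs⟩ := exists_isNClique_mem_of_maximal_cliqueFree
    (maximal_cliqueFree_iff.mpr ⟨hfree, hmax⟩) hcard x
  have hK := hs.erase_of_mem hxs
  refine ⟨s.erase x, notMem_erase x s, hK.card_eq, fun y hy ↦ ?_,
    fun a ha b hb hab ↦ hK.isClique ha hb hab⟩
  exact hs.isClique hxs (mem_of_mem_erase hy) (ne_of_mem_erase hy).symm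

/-- For `n ≥ 3`, if `G` is a maximal `K_n`-free simple graph on a vertex set `X` with at
least `n - 1` elements, then every vertex `x` lies in a clique of size `n - 1`: there is a
set `K` of `n - 2` vertices distinct from `x`, pairwise adjacent, all adjacent to `x`. -/
theorem stmt_11 {X : Type*} {n : ℕ} (hn : 3 ≤ n) (G : SimpleGraph X)
    (hfree : G.CliqueFree n)
    (hmax : ¬∃ H : SimpleGraph X, H.CliqueFree n ∧ G < H)
    (hcard : (↑(n - 1) : Cardinal) ≤ Cardinal.mk X) :
    ∀ x : X, ∃ K : Finset X, x ∉ K ∧ K.card = n - 2 ∧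
      (∀ y ∈ K, G.Adj x y) ∧ ∀ a ∈ K, ∀ b ∈ K, a ≠ b → G.Adj a b :=
  stmt_11_general G hfree hmax hcard
end

section
/- Let n ≥ 3, let G be a maximal K_n-free simple graph on a vertex set X with at least n − 1 elements, and let (Y_x)_{x ∈ X} be a family of nonempty sets. Let Y = Σ_{x ∈ X} Y_x (the disjoint union of the Y_x, with elements written (x, y) for y ∈ Y_x) and let H be the simple graph on Y in which (x, y) and (x', y') are adjacent if and only if x and x' are adjacent in G. Then H is a maximal K_n-free graph. -/
private lemma notCliqueFree_of_fun {V : Type*} {H : SimpleGraph V} {n : ℕ} (f : Fin n → V)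
    (h : ∀ i j, i ≠ j → H.Adj (f i) (f j)) : ¬ H.CliqueFree n := by
  rw [SimpleGraph.not_cliqueFree_iff]
  have hinj : Function.Injective f := by
    intro i j hij
    by_contra hne
    exact H.irrefl (hij ▸ h i j hne)
  refine ⟨⟨⟨f, fun hij => h _ _ hij⟩, hinj⟩⟩

private lemma avoid_point {X : Type*} {k : ℕ} {f : Fin (k + 1) → X}
    (hinj : Function.Injective f) (a : X) :
    ∃ g : Fin k → Fin (k + 1), Function.Injective g ∧ ∀ i, f (g i) ≠ a := by
  by_cases h : ∃ j, f j = a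
  · obtain ⟨j, hj⟩ := h
    exact ⟨j.succAbove, Fin.succAbove_right_injective,
      fun i hi => Fin.succAbove_ne j i (hinj (hi.trans hj.symm))⟩
  · push_neg at h
    exact ⟨Fin.castSucc, Fin.castSucc_injective _, fun i => h _⟩

private lemma key_lemma {X : Type*} {m : ℕ} {G : SimpleGraph X}
    (hfree : G.CliqueFree (m + 3))
    (hmax : ¬∃ H : SimpleGraph X, H.CliqueFree (m + 3) ∧ G < H)
    {a b : X} (hab : a ≠ b) (hnadj : ¬ G.Adj a b) :
    ∃ c : Fin (m + 1) → X, (∀ k, G.Adj a (c k)) ∧ (∀ k, G.Adj b (c k)) ∧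
      ∀ k l, k ≠ l → G.Adj (c k) (c l) := by
  set G' := G ⊔ SimpleGraph.edge a b with hG'
  have hlt : G < G' := by
    refine lt_of_le_of_ne le_sup_left ?_
    intro h
    apply hnadj
    have : G'.Adj a b := Or.inr (by rw [SimpleGraph.edge_adj]; exact ⟨Or.inl ⟨rfl, rfl⟩, hab⟩)
    rwa [← h] at this
  have hnfree : ¬ G'.CliqueFree (m + 3) := fun h => hmax ⟨_, h, hlt⟩
  rw [SimpleGraph.not_cliqueFree_iff] at hnfree
  obtain ⟨e⟩ := hnfree
  have hadj : ∀ i j : Fin (m + 3), i ≠ j → G'.Adj (e i) (e j) := by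
    intro i j hij
    exact e.toHom.map_adj (by simpa using hij)
  have hGadj : ∀ s t : Fin (m + 3), s ≠ t →
      ¬(e s = a ∧ e t = b) → ¬(e s = b ∧ e t = a) → G.Adj (e s) (e t) := by
    intro s t hst h1 h2
    have := hadj s t hst
    simp only [hG', SimpleGraph.sup_adj, SimpleGraph.edge_adj] at this
    tauto
  have hspecial : ∃ i j : Fin (m + 3), i ≠ j ∧ ¬ G.Adj (e i) (e j) := by
    by_contra h
    push_neg at h
    exact notCliqueFree_of_fun (fun i => e i) (fun i j hij => h i j hij) hfree
  obtain ⟨i, j, hij, hG⟩ := hspecial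
  have hedge : (e i = a ∧ e j = b ∨ e i = b ∧ e j = a) ∧ e i ≠ e j := by
    have := (hadj i j hij).resolve_left hG
    rwa [SimpleGraph.edge_adj] at this
  have main : ∀ i j : Fin (m + 3), j ≠ i → (a = e i ∨ a = e j) → (b = e i ∨ b = e j) →
      ∃ c : Fin (m + 1) → X, (∀ k, G.Adj (e i) (c k)) ∧ (∀ k, G.Adj (e j) (c k)) ∧
        ∀ k l, k ≠ l → G.Adj (c k) (c l) := by
    intro i j hji ha' hb'
    obtain ⟨p, hp⟩ := Fin.exists_succAbove_eq hji
    set q : Fin (m + 1) → Fin (m + 3) := fun k => i.succAbove (p.succAbove k) with hq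
    have hqi : ∀ k, q k ≠ i := fun k => Fin.succAbove_ne i _
    have hqj : ∀ k, q k ≠ j := by
      intro k h
      rw [← hp] at h
      exact Fin.succAbove_ne p k (Fin.succAbove_right_injective h)
    have hqinj : Function.Injective q :=
      Fin.succAbove_right_injective.comp Fin.succAbove_right_injective
    have hqab : ∀ k, e (q k) ≠ a ∧ e (q k) ≠ b := by
      intro k
      constructor
      · intro h
        rcases ha' with h' | h'
        · exact hqi k (e.injective (h.trans h'))
        · exact hqj k (e.injective (h.trans h'))
      · intro h
        rcases hb' with h' | h'
        · exact hqi k (e.injective (h.trans h'))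
        · exact hqj k (e.injective (h.trans h'))
    refine ⟨fun k => e (q k), ?_, ?_, ?_⟩
    · intro k
      exact hGadj i (q k) (Ne.symm (hqi k))
        (fun h => (hqab k).2 h.2) (fun h => (hqab k).1 h.2)
    · intro k
      exact hGadj j (q k) (Ne.symm (hqj k))
        (fun h => (hqab k).2 h.2) (fun h => (hqab k).1 h.2)
    · intro k l hkl
      exact hGadj (q k) (q l) (fun h => hkl (hqinj h))
        (fun h => (hqab l).2 h.2) (fun h => (hqab k).2 h.1)
  rcases hedge.1 with ⟨hia, hjb⟩ | ⟨hib, hja⟩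
  · obtain ⟨c, h1, h2, h3⟩ := main i j hij.symm (Or.inl hia.symm) (Or.inr hjb.symm)
    exact ⟨c, by rwa [hia] at h1, by rwa [hjb] at h2, h3⟩
  · obtain ⟨c, h1, h2, h3⟩ := main i j hij.symm (Or.inr hja.symm) (Or.inl hib.symm)
    exact ⟨c, by rwa [hja] at h2, by rwa [hib] at h1, h3⟩

/-- For `n ≥ 3`, let `G` be a maximal `K_n`-free simple graph on a vertex set `X` with at
least `n - 1` elements, and let `(Y x)_{x ∈ X}` be a family of nonempty sets. Then the
graph on `Σ x, Y x` in which `(x, y)` and `(x', y')` are adjacent iff `x` and `x'` are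
adjacent in `G` (i.e. the comap of `G` along the first projection) is a maximal `K_n`-free
graph. -/
theorem stmt_12 {X : Type*} {n : ℕ} (hn : 3 ≤ n) (G : SimpleGraph X)
    (hfree : G.CliqueFree n)
    (hmax : ¬∃ H : SimpleGraph X, H.CliqueFree n ∧ G < H)
    (hcard : (↑(n - 1) : Cardinal) ≤ Cardinal.mk X)
    (Y : X → Type*) (hY : ∀ x, Nonempty (Y x)) :
    (G.comap (Sigma.fst : (Σ x, Y x) → X)).CliqueFree n ∧
    ¬∃ H : SimpleGraph (Σ x, Y x), H.CliqueFree n ∧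
      G.comap (Sigma.fst : (Σ x, Y x) → X) < H := by
  obtain ⟨m, rfl⟩ : ∃ m, n = m + 3 := ⟨n - 3, by omega⟩
  have part1 : (G.comap (Sigma.fst : (Σ x, Y x) → X)).CliqueFree (m + 3) := by
    by_contra h
    rw [SimpleGraph.not_cliqueFree_iff] at h
    obtain ⟨e⟩ := h
    refine notCliqueFree_of_fun (fun i => (e i).1) ?_ hfree
    intro i j hij
    have := e.toHom.map_adj (show (⊤ : SimpleGraph (Fin (m + 3))).Adj i j by simpa using hij)
    rwa [SimpleGraph.comap_adj] at this
  refine ⟨part1, ?_⟩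
  rintro ⟨H, hHfree, hlt⟩
  have hle : G.comap (Sigma.fst : (Σ x, Y x) → X) ≤ H := hlt.le
  obtain ⟨u, v, hH, hnG⟩ : ∃ u v : Σ x, Y x, H.Adj u v ∧
      ¬ (G.comap (Sigma.fst : (Σ x, Y x) → X)).Adj u v := by
    by_contra h
    push_neg at h
    exact hlt.not_ge (fun u v huv => h u v huv)
  rw [SimpleGraph.comap_adj] at hnG
  have hc : ∃ c : Fin (m + 1) → X, (∀ k, G.Adj u.1 (c k)) ∧ (∀ k, G.Adj v.1 (c k)) ∧
      ∀ k l, k ≠ l → G.Adj (c k) (c l) := by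
    by_cases hab : u.1 = v.1
    · -- need m+1 vertices adjacent to u.1 forming a clique
      suffices h : ∃ c : Fin (m + 1) → X, (∀ k, G.Adj u.1 (c k)) ∧
          ∀ k l, k ≠ l → G.Adj (c k) (c l) by
        obtain ⟨c, h1, h2⟩ := h
        exact ⟨c, h1, fun k => hab ▸ h1 k, h2⟩
      set a := u.1 with ha
      by_cases hex : ∃ b', b' ≠ a ∧ ¬ G.Adj a b'
      · obtain ⟨b', hb1, hb2⟩ := hex
        obtain ⟨c, h1, _, h3⟩ := key_lemma hfree hmax (Ne.symm hb1) hb2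
        exact ⟨c, h1, h3⟩
      · push_neg at hex
        -- every vertex ≠ a is adjacent to a
        have hadj_a : ∀ x, x ≠ a → G.Adj a x := fun x hx => hex x hx
        by_cases hex2 : ∃ s t : X, s ≠ t ∧ ¬ G.Adj s t
        · obtain ⟨s, t, hst, hnst⟩ := hex2
          obtain ⟨d, hd1, _, hd3⟩ := key_lemma hfree hmax hst hnst
          set f : Fin (m + 2) → X := Fin.cons s d with hf
          have hpair : ∀ i j : Fin (m + 2), i ≠ j → G.Adj (f i) (f j) := by
            intro i j hij
            induction i using Fin.cases with
            | zero =>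
              induction j using Fin.cases with
              | zero => exact absurd rfl hij
              | succ j => simpa [hf] using hd1 j
            | succ i =>
              induction j using Fin.cases with
              | zero => exact (by simpa [hf] using hd1 i : G.Adj s (d i)).symm
              | succ j =>
                have : i ≠ j := fun h => hij (by rw [h])
                simpa [hf] using hd3 i j this
          have hfinj : Function.Injective f := by
            intro i j hij
            by_contra hne
            exact G.irrefl (hij ▸ hpair i j hne)
          obtain ⟨g, hginj, hgne⟩ := avoid_point hfinj a
          refine ⟨fun k => f (g k), fun k => hadj_a _ (hgne k), ?_⟩
          intro k l hkl
          exact hpair _ _ (fun h => hkl (hginj h))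
        · push_neg at hex2
          -- G is complete; extract m+2 distinct vertices
          have hcard' : Cardinal.mk (ULift.{_, 0} (Fin (m + 2))) ≤ Cardinal.mk X := by
            simpa using hcard
          rw [Cardinal.le_def] at hcard'
          obtain ⟨emb⟩ := hcard'
          set f : Fin (m + 2) → X := fun i => emb ⟨i⟩ with hf
          have hfinj : Function.Injective f := by
            intro i j hij
            have := emb.injective hij
            simpa using congrArg ULift.down this
          obtain ⟨g, hginj, hgne⟩ := avoid_point hfinj a
          refine ⟨fun k => f (g k), fun k => hadj_a _ (hgne k), ?_⟩
          intro k l hkl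
          exact hex2 _ _ (fun h => hkl (hginj (hfinj h)))
    · exact key_lemma hfree hmax hab hnG
  obtain ⟨c, h1, h2, h3⟩ := hc
  set w : Fin (m + 1) → Σ x, Y x := fun k => ⟨c k, (hY _).some⟩ with hw
  have h1' : ∀ k, H.Adj u (w k) := fun k => hle (h1 k)
  have h2' : ∀ k, H.Adj v (w k) := fun k => hle (h2 k)
  have h3' : ∀ k l, k ≠ l → H.Adj (w k) (w l) := fun k l hkl => hle (h3 k l hkl)
  set f : Fin (m + 3) → Σ x, Y x := Fin.cons u (Fin.cons v w) with hf
  refine notCliqueFree_of_fun f ?_ hHfree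
  intro i j hij
  induction i using Fin.cases with
  | zero =>
    induction j using Fin.cases with
    | zero => exact absurd rfl hij
    | succ j =>
      induction j using Fin.cases with
      | zero => simpa [hf] using hH
      | succ j => simpa [hf] using h1' j
  | succ i =>
    induction j using Fin.cases with
    | zero =>
      induction i using Fin.cases with
      | zero => simpa [hf] using hH.symm
      | succ i => simpa [hf] using (h1' i).symm
    | succ j =>
      induction i using Fin.cases with
      | zero =>
        induction j using Fin.cases with
        | zero => exact absurd rfl hij
        | succ j => simpa [hf] using h2' j
      | succ i =>
        induction j using Fin.cases with
        | zero => simpa [hf] using (h2' i).symm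
        | succ j =>
          have : i ≠ j := fun h => hij (by rw [h])
          simpa [hf] using h3' i j this
end

section
/- Let n ≥ 3 and let G be a K_n-free simple graph on a countable vertex set V such that for every finite set H ⊆ V and every subset K ⊆ H whose induced subgraph is K_{n−1}-free (K contains no clique of size n − 1), there exists a vertex v ∈ V ∖ H that is adjacent to every vertex of K and to no vertex of H ∖ K. Then G is a maximal K_n-free graph: every simple graph on V whose edge set properly contains that of G has a clique of size n. -/
/-!
Let `G < H'` and pick an edge `ab` of `H'` that is not an edge of `G`. Applying the extension
property with `K = H = {a, b} ∪ T` grows a `G`-clique `T` inside the common neighbourhood of `a`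
and `b` one vertex at a time: as long as `|T| + 2 ≤ n - 1`, the set `{a, b} ∪ T` has no
`(n-1)`-clique, since the only candidate is the whole set and `a`, `b` are not `G`-adjacent.
This yields such a clique of size `n - 2`, and together with `a` and `b` it is an `n`-clique of `H'`.
-/

namespace SimpleGraph

variable {V : Type*} {G G' : SimpleGraph V} {a b : V}

lemma exists_adj_not_adj_of_lt (h : G < G') : ∃ a b, G'.Adj a b ∧ ¬G.Adj a b := by
  by_contra! hcon
  exact h.not_ge fun a b => hcon a b

lemma commonNeighbors_mono (h : G ≤ G') : G.commonNeighbors a b ⊆ G'.commonNeighbors a b :=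
  fun _ hx => ⟨h hx.1, h hx.2⟩

lemma cliqueFreeOn_of_card_le_of_not_adj {H : Finset V} {m : ℕ} (hcard : H.card ≤ m)
    (ha : a ∈ H) (hb : b ∈ H) (hne : a ≠ b) (hab : ¬G.Adj a b) : G.CliqueFreeOn H m := by
  intro t ht hclique
  have htH : t = H :=
    Finset.eq_of_subset_of_card_le (Finset.coe_subset.1 ht) (hcard.trans hclique.card_eq.ge)
  subst htH
  exact hab (hclique.isClique ha hb hne)

variable [DecidableEq V]

lemma IsNClique.insert_insert_of_subset_commonNeighbors {T : Finset V} {k : ℕ}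
    (hT : G.IsNClique k T) (hTab : ↑T ⊆ G.commonNeighbors a b) (hab : G.Adj a b) :
    G.IsNClique (k + 2) (insert a (insert b T)) := by
  have hbT : G.IsNClique (k + 1) (insert b T) :=
    hT.insert fun x hx => (G.mem_commonNeighbors.1 (hTab hx)).2
  refine hbT.insert fun x hx => ?_
  rcases Finset.mem_insert.1 hx with rfl | hx
  · exact hab
  · exact (G.mem_commonNeighbors.1 (hTab hx)).1

lemma exists_isNClique_subset_commonNeighbors {m : ℕ}
    (hext : ∀ H : Finset V, G.CliqueFreeOn H m → ∃ v, ∀ h ∈ H, G.Adj v h)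
    (hne : a ≠ b) (hab : ¬G.Adj a b) :
    ∀ k < m, ∃ T : Finset V, G.IsNClique k T ∧ ↑T ⊆ G.commonNeighbors a b := by
  intro k hk
  induction k with
  | zero => exact ⟨∅, isNClique_empty.2 rfl, by simp⟩
  | succ k ih =>
    obtain ⟨T, hT, hTab⟩ := ih (by omega)
    have hfree : G.CliqueFreeOn (insert a (insert b T) : Finset V) m := by
      refine cliqueFreeOn_of_card_le_of_not_adj ?_ (by simp) (by simp) hne hab
      grw [Finset.card_insert_le, Finset.card_insert_le, hT.card_eq]
      omega
    obtain ⟨v, hv⟩ := hext _ hfree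
    refine ⟨insert v T, hT.insert fun x hx => hv x (by simp [hx]), ?_⟩
    rw [Finset.coe_insert, Set.insert_subset_iff]
    exact ⟨⟨(hv a (by simp)).symm, (hv b (by simp)).symm⟩, hTab⟩

end SimpleGraph

open SimpleGraph in
theorem stmt_13_general {V : Type*} {n : ℕ} (hn : 3 ≤ n)
    (G : SimpleGraph V)
    (hext : ∀ H : Finset V, ∀ K ⊆ H,
      (∀ s : Finset V, s ⊆ K → ¬G.IsNClique (n - 1) s) →
      ∃ v : V, v ∉ H ∧ (∀ k ∈ K, G.Adj v k) ∧ ∀ h ∈ H, h ∉ K → ¬G.Adj v h) :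
    ∀ H' : SimpleGraph V, G < H' → ∃ s : Finset V, H'.IsNClique n s := by
  classical
  intro H' hlt
  have hext' : ∀ H : Finset V, G.CliqueFreeOn H (n - 1) → ∃ v, ∀ h ∈ H, G.Adj v h := by
    intro H hH
    obtain ⟨v, -, hv, -⟩ := hext H H subset_rfl fun s hs => hH (Finset.coe_subset.2 hs)
    exact ⟨v, hv⟩
  obtain ⟨a, b, hab', hab⟩ := exists_adj_not_adj_of_lt hlt
  obtain ⟨T, hT, hTab⟩ :=
    exists_isNClique_subset_commonNeighbors hext' (H'.ne_of_adj hab') hab (n - 2) (by omega)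
  have hclique := (hT.mono hlt.le).insert_insert_of_subset_commonNeighbors
    (hTab.trans (commonNeighbors_mono hlt.le)) hab'
  exact ⟨_, Nat.sub_add_cancel (by omega : 2 ≤ n) ▸ hclique⟩

/-- For `n ≥ 3`, a `K_n`-free graph `G` on a countable vertex set `V` with the Henson
extension property (for every finite `H ⊆ V` and every `K ⊆ H` whose induced subgraph is
`K_{n-1}`-free there is a vertex outside `H` adjacent to everything in `K` and to nothing
in `H ∖ K`) is a maximal `K_n`-free graph: every simple graph on `V` whose edge set
properly contains that of `G` has a clique of size `n`. -/
theorem stmt_13 {V : Type*} [Countable V] {n : ℕ} (hn : 3 ≤ n)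
    (G : SimpleGraph V) (hfree : G.CliqueFree n)
    (hext : ∀ H : Finset V, ∀ K ⊆ H,
      (∀ s : Finset V, s ⊆ K → ¬G.IsNClique (n - 1) s) →
      ∃ v : V, v ∉ H ∧ (∀ k ∈ K, G.Adj v k) ∧ ∀ h ∈ H, h ∉ K → ¬G.Adj v h) :
    ∀ H' : SimpleGraph V, G < H' → ∃ s : Finset V, H'.IsNClique n s :=
  stmt_13_general hn G hext
end

section
/- Let m ≥ 2, let X be a set with at least m elements, and let ρ ⊆ X × X be a binary relation such that for every m-element subset K of X we have ρ ∩ (K × K) ≠ ∅. Then ρ is minimal with this property (no proper subrelation has it) if and only if there exist a set R ⊆ X such that X ∖ R has at least m − 1 elements and a relation σ ⊆ (X ∖ R) × (X ∖ R) such that: ρ = σ ∪ Δ_R where Δ_R = {(x, x) : x ∈ R}; σ is irreflexive and asymmetric ((x, y) ∈ σ implies (y, x) ∉ σ); and the simple graph τ on X ∖ R whose edges are exactly the pairs {x, y} of distinct vertices with (x, y) ∉ σ and (y, x) ∉ σ is a maximal K_m-free graph. -/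
open SimpleGraph in
lemma aux_maxfree_clique {V : Type*} {m : ℕ}
    (hV : ((m - 1 : ℕ) : Cardinal) ≤ Cardinal.mk V)
    (τ : SimpleGraph V)
    (hmax : ¬∃ τ' : SimpleGraph V, τ'.CliqueFree m ∧ τ < τ') :
    ∃ C : Finset V, τ.IsNClique (m - 1) C := by
  classical
  by_contra h
  push_neg at h
  have hfree' : τ.CliqueFree (m - 1) := fun t ht => h t ht
  by_cases hc : ∃ a b : V, a ≠ b ∧ ¬τ.Adj a b
  · obtain ⟨a, b, hab, hnadj⟩ := hc
    have hadj : (τ ⊔ edge a b).Adj a b := by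
      simp [edge_adj, hab]
    have hlt : τ < τ ⊔ edge a b := by
      refine lt_of_le_of_ne le_sup_left fun he => hnadj ?_
      rw [he]; exact hadj
    have hnf : ¬(τ ⊔ edge a b).CliqueFree m := fun hf => hmax ⟨_, hf, hlt⟩
    rw [SimpleGraph.CliqueFree] at hnf
    push_neg at hnf
    obtain ⟨K, hK⟩ := hnf
    have hcard' : m - 1 ≤ (K.erase b).card := by
      have h1 := Finset.pred_card_le_card_erase (s := K) (a := b)
      rw [hK.2] at h1; exact h1
    obtain ⟨C, hCsub, hCcard⟩ := Finset.exists_subset_card_eq hcard'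
    refine hfree' C ⟨?_, hCcard⟩
    intro u hu v hv huv
    have hu' : u ∈ K.erase b := hCsub (by exact_mod_cast hu)
    have hv' : v ∈ K.erase b := hCsub (by exact_mod_cast hv)
    have := hK.1 (Finset.mem_of_mem_erase hu' : u ∈ K) (Finset.mem_of_mem_erase hv') huv
    rcases this with h1 | h1
    · exact h1
    · rw [edge_adj] at h1
      exfalso
      rcases h1.1 with ⟨_, h2⟩ | ⟨h2, _⟩
      · exact Finset.ne_of_mem_erase hv' h2
      · exact Finset.ne_of_mem_erase hu' h2
  · push_neg at hc
    obtain ⟨s, hs⟩ := Cardinal.exists_finset_le_card V (m - 1) hV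
    obtain ⟨t, hts, htcard⟩ := Finset.exists_subset_card_eq hs
    refine hfree' t ⟨?_, htcard⟩
    intro u hu v hv huv
    exact hc u v huv


/-- Let `m ≥ 2`, let `X` have at least `m` elements, and let `ρ` be a binary relation on
`X` meeting `K × K` for every `m`-element subset `K` of `X`. Then `ρ` is minimal with this
property iff `ρ = σ ∪ Δ_R` where `R ⊆ X`, `X ∖ R` has at least `m - 1` elements, `σ` is an
irreflexive asymmetric relation on `X ∖ R`, and the simple graph on `X ∖ R` whose edges are
the pairs of distinct points related by `σ` in neither direction is a maximal `K_m`-free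
graph. -/
theorem stmt_16 {X : Type*} {m : ℕ} (hm : 2 ≤ m)
    (hX : (m : Cardinal) ≤ Cardinal.mk X)
    (ρ : Set (X × X))
    (hρ : ∀ K : Finset X, K.card = m → ∃ x ∈ K, ∃ y ∈ K, (x, y) ∈ ρ) :
    (¬∃ ρ' : Set (X × X), ρ' ⊂ ρ ∧
        ∀ K : Finset X, K.card = m → ∃ x ∈ K, ∃ y ∈ K, (x, y) ∈ ρ') ↔
      ∃ R : Set X, (↑(m - 1) : Cardinal) ≤ Cardinal.mk {x : X // x ∉ R} ∧
        ∃ σ : Set (X × X),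
          (∀ p ∈ σ, p.1 ∉ R ∧ p.2 ∉ R) ∧
          ρ = σ ∪ {p : X × X | p.1 = p.2 ∧ p.1 ∈ R} ∧
          (∀ x : X, (x, x) ∉ σ) ∧
          (∀ x y : X, (x, y) ∈ σ → (y, x) ∉ σ) ∧
          ∃ τ : SimpleGraph {x : X // x ∉ R},
            (∀ a b : {x : X // x ∉ R}, τ.Adj a b ↔
              a ≠ b ∧ (a.1, b.1) ∉ σ ∧ (b.1, a.1) ∉ σ) ∧
            τ.CliqueFree m ∧
            ¬∃ τ' : SimpleGraph {x : X // x ∉ R}, τ'.CliqueFree m ∧ τ < τ' := by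
  classical
  constructor
  · -- forward: minimality → decomposition
    intro hmin
    have hrem : ∀ p ∈ ρ, ∃ K : Finset X, K.card = m ∧
        ∀ x ∈ K, ∀ y ∈ K, (x, y) ∈ ρ → (x, y) = p := by
      intro p hp
      by_contra hcon
      push_neg at hcon
      refine hmin ⟨ρ \ {p}, Set.sdiff_singleton_ssubset.mpr hp, fun K hK => ?_⟩
      obtain ⟨x, hx, y, hy, hxy, hne⟩ := hcon K hK
      exact ⟨x, hx, y, hy, hxy, hne⟩
    set R : Set X := {x | (x, x) ∈ ρ} with hRdef
    have fact1 : ∀ a b : X, (a, b) ∈ ρ → a ≠ b → a ∉ R ∧ b ∉ R := by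
      intro a b hab hne
      constructor
      · intro haa
        obtain ⟨K, hK, hP⟩ := hrem (a, b) hab
        obtain ⟨x, hx, y, hy, hxy⟩ := hρ K hK
        have heq := hP x hx y hy hxy
        have hxa : x = a := congrArg Prod.fst heq
        have h3 := hP a (hxa ▸ hx) a (hxa ▸ hx) haa
        exact hne (congrArg Prod.snd h3)
      · intro hbb
        obtain ⟨K, hK, hP⟩ := hrem (a, b) hab
        obtain ⟨x, hx, y, hy, hxy⟩ := hρ K hK
        have hyb : y = b := congrArg Prod.snd (hP x hx y hy hxy)
        have h3 := hP b (hyb ▸ hy) b (hyb ▸ hy) hbb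
        exact hne (congrArg Prod.fst h3).symm
    have fact2 : ∀ a b : X, (a, b) ∈ ρ → a ≠ b → (b, a) ∉ ρ := by
      intro a b hab hne hba
      obtain ⟨K, hK, hP⟩ := hrem (b, a) hba
      obtain ⟨x, hx, y, hy, hxy⟩ := hρ K hK
      have hxb : x = b := congrArg Prod.fst (hP x hx y hy hxy)
      have hya : y = a := congrArg Prod.snd (hP x hx y hy hxy)
      have h3 := hP a (hya ▸ hy) b (hxb ▸ hx) hab
      exact hne (congrArg Prod.fst h3)
    set σ : Set (X × X) := {p ∈ ρ | p.1 ≠ p.2} with hσdef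
    have hσρ : σ ⊆ ρ := fun p hp => hp.1
    have hσR : ∀ p ∈ σ, p.1 ∉ R ∧ p.2 ∉ R := by
      rintro ⟨a, b⟩ ⟨hp, hne⟩
      exact fact1 a b hp hne
    have hdecomp : ρ = σ ∪ {p : X × X | p.1 = p.2 ∧ p.1 ∈ R} := by
      ext ⟨a, b⟩
      constructor
      · intro hab
        by_cases h : a = b
        · subst h; exact Or.inr ⟨rfl, hab⟩
        · exact Or.inl ⟨hab, h⟩
      · rintro (h | ⟨h1, h2⟩)
        · exact h.1
        · have : a = b := h1
          subst this; exact h2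
    have hirr : ∀ x : X, (x, x) ∉ σ := fun x hx => hx.2 rfl
    have hasym : ∀ x y : X, (x, y) ∈ σ → (y, x) ∉ σ := by
      intro x y hxy hyx
      exact fact2 x y hxy.1 hxy.2 hyx.1
    have hcard : (↑(m - 1) : Cardinal) ≤ Cardinal.mk {x : X // x ∉ R} := by
      by_contra hlt
      push_neg at hlt
      have hfin : Finite {x : X // x ∉ R} := by
        rw [← Cardinal.lt_aleph0_iff_finite]
        exact hlt.trans (Cardinal.nat_lt_aleph0 _)
      haveI := Fintype.ofFinite {x : X // x ∉ R}
      have hflt : Fintype.card {x : X // x ∉ R} < m - 1 := by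
        rw [Cardinal.mk_fintype] at hlt
        exact_mod_cast hlt
      obtain ⟨r, hr⟩ : ∃ r, r ∈ R := by
        by_contra hno
        push_neg at hno
        have : Cardinal.mk X ≤ Cardinal.mk {x : X // x ∉ R} :=
          Cardinal.mk_le_of_injective (f := fun x => ⟨x, hno x⟩)
            (fun u v h => congrArg Subtype.val h)
        have h1 : (m : Cardinal) ≤ Cardinal.mk {x : X // x ∉ R} := hX.trans this
        have h2 : ((m - 1 : ℕ) : Cardinal) ≤ (m : Cardinal) := by exact_mod_cast Nat.sub_le m 1
        exact hlt.not_ge (h2.trans h1)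
      obtain ⟨K, hK, hP⟩ := hrem (r, r) hr
      have hsplit : (K.filter (fun x => x ∈ R)).card + (K.filter (fun x => x ∉ R)).card
          = K.card := Finset.card_filter_add_card_filter_not (s := K)
          (p := fun x => x ∈ R)
      have hnotR : (K.filter (fun x => x ∉ R)).card ≤ Fintype.card {x : X // x ∉ R} := by
        have h0 : (K.subtype (fun x => x ∉ R)).card = (K.filter (fun x => x ∉ R)).card :=
          Finset.card_subtype _ _
        rw [← h0]
        exact Finset.card_le_univ _
      obtain ⟨a, ha, b, hb, hab⟩ := Finset.one_lt_card.mp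
        (show 1 < (K.filter (fun x => x ∈ R)).card by omega)
      rw [Finset.mem_filter] at ha hb
      rcases em (a = r) with rfl | hne
      · have h3 := hP b hb.1 b hb.1 hb.2
        exact hab ((congrArg Prod.fst h3).symm)
      · have h3 := hP a ha.1 a ha.1 ha.2
        exact hne (congrArg Prod.fst h3)
    refine ⟨R, hcard, σ, hσR, hdecomp, hirr, hasym, ?_⟩
    set τ : SimpleGraph {x : X // x ∉ R} :=
      { Adj := fun a b => a ≠ b ∧ (a.1, b.1) ∉ σ ∧ (b.1, a.1) ∉ σ
        symm := ⟨by rintro a b ⟨h1, h2, h3⟩; exact ⟨h1.symm, h3, h2⟩⟩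
        loopless := ⟨by rintro a ⟨h1, _, _⟩; exact h1 rfl⟩ } with hτdef
    have hτadj : ∀ a b : {x : X // x ∉ R}, τ.Adj a b ↔
        a ≠ b ∧ (a.1, b.1) ∉ σ ∧ (b.1, a.1) ∉ σ := fun a b => Iff.rfl
    have vembi : Function.Injective (fun x : {x : X // x ∉ R} => x.1) := Subtype.val_injective
    have hfree : τ.CliqueFree m := by
      intro t ht
      set K : Finset X := t.map ⟨fun x => x.1, vembi⟩ with hKdef
      have hKcard : K.card = m := by rw [hKdef, Finset.card_map, ht.2]
      obtain ⟨x, hx, y, hy, hxy⟩ := hρ K hKcard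
      obtain ⟨x', hx', hxx⟩ := Finset.mem_map.mp hx
      obtain ⟨y', hy', hyy⟩ := Finset.mem_map.mp hy
      have hxx' : x'.1 = x := hxx
      have hyy' : y'.1 = y := hyy
      rcases em (x = y) with rfl | hne
      · exact x'.2 (show x'.1 ∈ R by rw [hxx']; exact hxy)
      · have hσxy : (x, y) ∈ σ := ⟨hxy, hne⟩
        have hne' : x' ≠ y' := fun h => hne (by rw [← hxx', ← hyy', h])
        have hadj := ht.1 hx' hy' hne'
        rw [hτadj] at hadj
        exact hadj.2.1 (show (x'.1, y'.1) ∈ σ by rw [hxx', hyy']; exact hσxy)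
    refine ⟨τ, hτadj, hfree, ?_⟩
    rintro ⟨τ', hfree', hlt⟩
    have key : ∀ a b : {x : X // x ∉ R}, τ'.Adj a b → (a.1, b.1) ∈ σ → False := by
      intro a b hadj hσab
      obtain ⟨K, hK, hP⟩ := hrem (a.1, b.1) (hσρ hσab)
      have hKR : ∀ x ∈ K, x ∉ R := by
        intro x hx hxR
        have h3 := hP x hx x hx hxR
        have h4 : a.1 = b.1 :=
          (congrArg Prod.fst h3).symm.trans (congrArg Prod.snd h3)
        exact hadj.ne (Subtype.ext h4)
      set K' : Finset {x : X // x ∉ R} :=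
        K.attach.map ⟨fun x => ⟨x.1, hKR x.1 x.2⟩, by
          intro u v h
          simp only [Subtype.mk.injEq] at h
          exact Subtype.ext h⟩ with hK'def
      have hK'card : K'.card = m := by rw [hK'def, Finset.card_map, Finset.card_attach, hK]
      refine hfree' K' ⟨?_, hK'card⟩
      intro u hu v hv hne
      obtain ⟨u0, hu0, huu⟩ := Finset.mem_map.mp (by exact_mod_cast hu)
      obtain ⟨v0, hv0, hvv⟩ := Finset.mem_map.mp (by exact_mod_cast hv)
      have huK : u.1 ∈ K := by rw [← huu]; exact u0.2
      have hvK : v.1 ∈ K := by rw [← hvv]; exact v0.2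
      by_cases h1 : (u.1, v.1) ∈ σ
      · have h3 := hP u.1 huK v.1 hvK (hσρ h1)
        have hua : u = a := Subtype.ext (congrArg Prod.fst h3)
        have hvb : v = b := Subtype.ext (congrArg Prod.snd h3)
        rw [hua, hvb]; exact hadj
      · by_cases h2 : (v.1, u.1) ∈ σ
        · have h3 := hP v.1 hvK u.1 huK (hσρ h2)
          have hva : v = a := Subtype.ext (congrArg Prod.fst h3)
          have hub : u = b := Subtype.ext (congrArg Prod.snd h3)
          rw [hva, hub]; exact hadj.symm
        · have hle : ∀ ⦃p q : {x : X // x ∉ R}⦄, τ.Adj p q → τ'.Adj p q := hlt.1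
          exact hle ((hτadj u v).mpr ⟨hne, h1, h2⟩)
    have hnle : ¬ τ' ≤ τ := hlt.2
    by_cases hex : ∃ a b, τ'.Adj a b ∧ ¬ τ.Adj a b
    · obtain ⟨a, b, hadj, hnadj⟩ := hex
      rw [hτadj] at hnadj
      push_neg at hnadj
      rcases em ((a.1, b.1) ∈ σ) with h1 | h1
      · exact key a b hadj h1
      · exact key b a hadj.symm (hnadj hadj.ne h1)
    · push_neg at hex
      exact hnle (by intro v w h; exact hex v w h)
  · -- backward: decomposition → minimality
    rintro ⟨R, hcard, σ, hσR, hdecomp, hirr, hasym, τ, hτadj, hfree, hmax⟩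
    rintro ⟨ρ', hsub, hprop⟩
    obtain ⟨p, hpρ, hpρ'⟩ := Set.exists_of_ssubset hsub
    have hρ'ρ : ρ' ⊆ ρ := hsub.subset
    have hdec := hdecomp
    rw [hdec] at hpρ
    rcases hpρ with hpσ | ⟨hp1, hp2⟩
    · -- p ∈ σ : use maximality (sup with edge)
      obtain ⟨a, b⟩ := p
      have haR : a ∉ R := (hσR _ hpσ).1
      have hbR : b ∉ R := (hσR _ hpσ).2
      have hne : a ≠ b := fun h => hirr a (by rwa [← h] at hpσ)
      set a' : {x : X // x ∉ R} := ⟨a, haR⟩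
      set b' : {x : X // x ∉ R} := ⟨b, hbR⟩
      have hne' : a' ≠ b' := fun h => hne (congrArg Subtype.val h)
      have hnadj : ¬ τ.Adj a' b' := by
        rw [hτadj]
        rintro ⟨-, h2, -⟩
        exact h2 hpσ
      have hadj : (τ ⊔ SimpleGraph.edge a' b').Adj a' b' := by
        simp [SimpleGraph.edge_adj, hne']
      have hltE : τ < τ ⊔ SimpleGraph.edge a' b' := by
        refine lt_of_le_of_ne le_sup_left fun he => hnadj ?_
        rw [he]; exact hadj
      have hnf : ¬(τ ⊔ SimpleGraph.edge a' b').CliqueFree m :=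
        fun hf => hmax ⟨_, hf, hltE⟩
      rw [SimpleGraph.CliqueFree] at hnf
      push_neg at hnf
      obtain ⟨K', hK'⟩ := hnf
      set K : Finset X := K'.map ⟨fun x => x.1, Subtype.val_injective⟩ with hKdef
      have hKcard : K.card = m := by rw [hKdef, Finset.card_map, hK'.2]
      obtain ⟨x, hx, y, hy, hxy⟩ := hprop K hKcard
      obtain ⟨x', hx', hxx⟩ := Finset.mem_map.mp hx
      obtain ⟨y', hy', hyy⟩ := Finset.mem_map.mp hy
      have hxx' : x'.1 = x := hxx
      have hyy' : y'.1 = y := hyy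
      have hxyρ : (x, y) ∈ ρ := hρ'ρ hxy
      rw [hdec] at hxyρ
      rcases hxyρ with hσxy | ⟨h1, h2⟩
      · have hnexy : x' ≠ y' := by
          intro h
          have hxy2 : x = y := by rw [← hxx', ← hyy', h]
          exact hirr y (hxy2 ▸ hσxy)
        have hcl := hK'.1 hx' hy' hnexy
        rcases hcl with hcl | hcl
        · rw [hτadj] at hcl
          exact hcl.2.1 (show (x'.1, y'.1) ∈ σ by rw [hxx', hyy']; exact hσxy)
        · rw [SimpleGraph.edge_adj] at hcl
          rcases hcl.1 with ⟨ha1, hb1⟩ | ⟨ha1, hb1⟩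
          · apply hpρ'
            have e1 : x = a := by rw [← hxx', ha1]
            have e2 : y = b := by rw [← hyy', hb1]
            rwa [e1, e2] at hxy
          · have hxb : x = b := by rw [← hxx', ha1]
            have hya : y = a := by rw [← hyy', hb1]
            rw [hxb, hya] at hσxy
            exact hasym a b hpσ hσxy
      · have h2' : x ∈ R := h2
        exact x'.2 (show x'.1 ∈ R by rw [hxx']; exact h2')
    · -- p diagonal on R : use an (m-1)-clique
      obtain ⟨C, hC⟩ := aux_maxfree_clique hcard τ hmax
      obtain ⟨x0, y0⟩ := p
      have hx0 : x0 = y0 := hp1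
      subst hx0
      set K : Finset X := insert x0 (C.map ⟨fun x => x.1, Subtype.val_injective⟩) with hKdef
      have hx0nm : x0 ∉ C.map ⟨fun x => x.1, Subtype.val_injective⟩ := by
        intro h
        obtain ⟨c, hc, hcc⟩ := Finset.mem_map.mp h
        have hcc' : c.1 = x0 := hcc
        exact c.2 (show c.1 ∈ R by rw [hcc']; exact hp2)
      have hKcard : K.card = m := by
        rw [hKdef, Finset.card_insert_of_notMem hx0nm, Finset.card_map, hC.2]
        omega
      obtain ⟨x, hx, y, hy, hxy⟩ := hprop K hKcard
      have hxyρ : (x, y) ∈ ρ := hρ'ρ hxy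
      rw [hdec] at hxyρ
      rcases hxyρ with hσxy | ⟨h1, h2⟩
      · have hxR : x ∉ R := (hσR _ hσxy).1
        have hyR : y ∉ R := (hσR _ hσxy).2
        have hxm : x ∈ C.map ⟨fun x => x.1, Subtype.val_injective⟩ := by
          rcases Finset.mem_insert.mp hx with h | h
          · exact absurd (h ▸ hp2) hxR
          · exact h
        have hym : y ∈ C.map ⟨fun x => x.1, Subtype.val_injective⟩ := by
          rcases Finset.mem_insert.mp hy with h | h
          · exact absurd (h ▸ hp2) hyR
          · exact h
        obtain ⟨x', hx', hxx⟩ := Finset.mem_map.mp hxm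
        obtain ⟨y', hy', hyy⟩ := Finset.mem_map.mp hym
        have hxx' : x'.1 = x := hxx
        have hyy' : y'.1 = y := hyy
        have hnexy : x' ≠ y' := by
          intro h
          have hxy2 : x = y := by rw [← hxx', ← hyy', h]
          exact hirr y (hxy2 ▸ hσxy)
        have hcl := hC.1 hx' hy' hnexy
        rw [hτadj] at hcl
        exact hcl.2.1 (show (x'.1, y'.1) ∈ σ by rw [hxx', hyy']; exact hσxy)
      · have h1' : x = y := h1
        have h2' : x ∈ R := h2
        have hxm : x = x0 := by
          rcases Finset.mem_insert.mp hx with h | h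
          · exact h
          · obtain ⟨c, hc, hcc⟩ := Finset.mem_map.mp h
            have hcc' : c.1 = x := hcc
            exact absurd (show c.1 ∈ R by rw [hcc']; exact h2') c.2
        have hym : y = x0 := by rw [← h1']; exact hxm
        rw [hxm, hym] at hxy
        exact hpρ' hxy
end

section
/- Let X be a set with at least 2 elements and ρ ⊆ X × X a binary relation such that for every two-element subset {x, y} of X at least one of (x, y), (y, x), (x, x), (y, y) belongs to ρ. Then ρ is minimal with this property (no proper subrelation has it) if and only if there exist a proper subset R ⊊ X and a tournament σ on X ∖ R (an irreflexive relation such that for all distinct x, y ∈ X ∖ R exactly one of (x, y) ∈ σ, (y, x) ∈ σ holds) such that ρ = σ ∪ Δ_R, where Δ_R = {(x, x) : x ∈ R}. -/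
/-!
A covering relation is minimal iff each of its elements is the only element of the relation in
some square `{x, y} ×ˢ {x, y}` with `x ≠ y`. An arc `(a, b)` with `a ≠ b` lies only in the square
of `{a, b}`, so being alone there excludes `(b, a)`, `(a, a)` and `(b, b)`; a loop `(a, a)` alone
in the square of `{a, z}` forces `(z, z)` to be missing. Hence the loops of a minimal cover sit on
a proper subset `R` and its arcs form a tournament off `R`. Conversely every arc of `σ ∪ Δ_R` is
alone in the square of its endpoints, and every loop at `a` in the square of `{a, z}`, `z ∉ R`.
-/

namespace Set

variable {X : Type*}

def CoversPairs (ρ : Set (X × X)) : Prop :=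
  ∀ x y : X, x ≠ y → (ρ ∩ {x, y} ×ˢ {x, y}).Nonempty

def IsSoleWitness (ρ : Set (X × X)) (p : X × X) : Prop :=
  ∃ x y : X, x ≠ y ∧ ρ ∩ {x, y} ×ˢ {x, y} = {p}

theorem coversPairs_iff {ρ : Set (X × X)} :
    CoversPairs ρ ↔
      ∀ x y : X, x ≠ y → (x, y) ∈ ρ ∨ (y, x) ∈ ρ ∨ (x, x) ∈ ρ ∨ (y, y) ∈ ρ := by
  refine forall₂_congr fun x y => imp_congr_right fun _ => ?_
  simp only [Set.Nonempty, Prod.exists, mem_inter_iff, mem_prod, mem_insert_iff,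
    mem_singleton_iff]
  constructor
  · rintro ⟨c, d, h, rfl | rfl, rfl | rfl⟩ <;> simp [h]
  · rintro (h | h | h | h) <;> exact ⟨_, _, h, by simp⟩

theorem not_exists_ssubset_coversPairs_iff {ρ : Set (X × X)} (hρ : CoversPairs ρ) :
    (¬∃ ρ' : Set (X × X), ρ' ⊂ ρ ∧ CoversPairs ρ') ↔ ∀ p ∈ ρ, IsSoleWitness ρ p := by
  constructor
  · intro hmin p hp
    by_contra hsole
    refine hmin ⟨ρ \ {p}, sdiff_singleton_ssubset.2 hp, fun x y hxy => ?_⟩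
    obtain ⟨q, hqρ, hq⟩ := hρ x y hxy
    by_cases hqp : q = p
    · subst hqp
      obtain ⟨r, ⟨hrρ, hr⟩, hrq⟩ : ∃ r ∈ ρ ∩ {x, y} ×ˢ {x, y}, r ≠ q := by
        by_contra! h
        exact hsole ⟨x, y, hxy, eq_singleton_iff_unique_mem.2 ⟨⟨hqρ, hq⟩, h⟩⟩
      exact ⟨r, ⟨hrρ, hrq⟩, hr⟩
    · exact ⟨q, ⟨hqρ, hqp⟩, hq⟩
  · rintro hsole ⟨ρ', hsub, hρ'⟩
    obtain ⟨p, hpρ, hpρ'⟩ := exists_of_ssubset hsub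
    obtain ⟨x, y, hxy, hsq⟩ := hsole p hpρ
    obtain ⟨q, hqρ', hq⟩ := hρ' x y hxy
    have hqp : q = p := by
      have : q ∈ ρ ∩ {x, y} ×ˢ {x, y} := ⟨hsub.1 hqρ', hq⟩
      rwa [hsq] at this
    exact hpρ' (hqp ▸ hqρ')

namespace IsSoleWitness

variable {ρ : Set (X × X)}

theorem notMem_of_ne {a b c d : X} (h : IsSoleWitness ρ (a, b)) (hc : c ∈ ({a, b} : Set X))
    (hd : d ∈ ({a, b} : Set X)) (hne : (c, d) ≠ (a, b)) : (c, d) ∉ ρ := by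
  obtain ⟨x, y, -, hsq⟩ := h
  have hab : (a, b) ∈ ρ ∩ {x, y} ×ˢ {x, y} := hsq ▸ rfl
  have hsub : ({a, b} : Set X) ⊆ {x, y} :=
    insert_subset_iff.2 ⟨hab.2.1, singleton_subset_iff.2 hab.2.2⟩
  intro hcd
  have : (c, d) ∈ ρ ∩ {x, y} ×ˢ {x, y} := ⟨hcd, hsub hc, hsub hd⟩
  rw [hsq] at this
  exact hne this

theorem exists_notMem_diag {a : X} (h : IsSoleWitness ρ (a, a)) : ∃ z, (z, z) ∉ ρ := by
  obtain ⟨x, y, hxy, hsq⟩ := h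
  have ha : a = x ∨ a = y := by simpa using (hsq ▸ rfl : (a, a) ∈ ρ ∩ {x, y} ×ˢ {x, y}).2.1
  have hloop (z : X) (hz : z = x ∨ z = y) (hza : z ≠ a) : (z, z) ∉ ρ := fun hzz => by
    have : (z, z) ∈ ρ ∩ {x, y} ×ˢ {x, y} := ⟨hzz, by simpa using hz, by simpa using hz⟩
    simp only [hsq, mem_singleton_iff, Prod.mk.injEq, and_self] at this
    exact hza this
  rcases ha with rfl | rfl
  · exact ⟨y, hloop y (.inr rfl) hxy.symm⟩
  · exact ⟨x, hloop x (.inl rfl) hxy⟩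

end IsSoleWitness

theorem isSoleWitness_of_asymm_union_diag {R : Set X} (hR : R ≠ univ) {σ : Set (X × X)}
    (hσR : ∀ p ∈ σ, p.1 ∉ R ∧ p.2 ∉ R) (hirr : ∀ x, (x, x) ∉ σ)
    (hasymm : ∀ x y, (x, y) ∈ σ → (y, x) ∉ σ) :
    ∀ p ∈ σ ∪ {p : X × X | p.1 = p.2 ∧ p.1 ∈ R},
      IsSoleWitness (σ ∪ {p : X × X | p.1 = p.2 ∧ p.1 ∈ R}) p := by
  rintro ⟨a, b⟩ (hab | ⟨hab, haR⟩)
  · obtain ⟨ha, hb⟩ := hσR _ hab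
    have hne : a ≠ b := by rintro rfl; exact hirr a hab
    have hba := hasymm a b hab
    refine ⟨a, b, hne, eq_singleton_iff_unique_mem.2 ⟨⟨Or.inl hab, by simp⟩, ?_⟩⟩
    rintro ⟨c, d⟩ ⟨hcd, hc, hd⟩
    simp only [mem_insert_iff, mem_singleton_iff] at hc hd
    rcases hc with rfl | rfl <;> rcases hd with rfl | rfl <;> simp_all
  · obtain rfl : a = b := hab
    obtain ⟨z, hz⟩ := (ne_univ_iff_exists_notMem R).1 hR
    have hne : a ≠ z := by rintro rfl; exact hz haR
    have haz : (a, z) ∉ σ := fun h => (hσR _ h).1 haR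
    have hza : (z, a) ∉ σ := fun h => (hσR _ h).2 haR
    refine ⟨a, z, hne, eq_singleton_iff_unique_mem.2 ⟨⟨Or.inr ⟨rfl, haR⟩, by simp⟩, ?_⟩⟩
    rintro ⟨c, d⟩ ⟨hcd, hc, hd⟩
    simp only [mem_insert_iff, mem_singleton_iff] at hc hd
    rcases hc with rfl | rfl <;> rcases hd with rfl | rfl <;> simp_all

theorem exists_tournament_union_diag_of_forall_isSoleWitness [Nonempty X] {ρ : Set (X × X)}
    (hρ : CoversPairs ρ) (hsole : ∀ p ∈ ρ, IsSoleWitness ρ p) :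
    ∃ R : Set X, R ≠ univ ∧ ∃ σ : Set (X × X),
      (∀ p ∈ σ, p.1 ∉ R ∧ p.2 ∉ R) ∧
      (∀ x : X, (x, x) ∉ σ) ∧
      (∀ x y : X, x ∉ R → y ∉ R → x ≠ y →
        ((x, y) ∈ σ ∧ (y, x) ∉ σ) ∨ ((x, y) ∉ σ ∧ (y, x) ∈ σ)) ∧
      ρ = σ ∪ {p : X × X | p.1 = p.2 ∧ p.1 ∈ R} := by
  have harc (a b : X) (hab : (a, b) ∈ ρ) (hne : a ≠ b) :
      (a, a) ∉ ρ ∧ (b, b) ∉ ρ ∧ (b, a) ∉ ρ := by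
    have h := hsole _ hab
    exact ⟨h.notMem_of_ne (by simp) (by simp) (by simp [hne]),
      h.notMem_of_ne (by simp) (by simp) (by simp [hne.symm]),
      h.notMem_of_ne (by simp) (by simp) (by simp [hne.symm])⟩
  refine ⟨{x | (x, x) ∈ ρ}, ?_, {p | p ∈ ρ ∧ p.1 ≠ p.2}, ?_, fun x hx => hx.2 rfl, ?_, ?_⟩
  · intro hR
    obtain ⟨a⟩ := ‹Nonempty X›
    have hdiag : ∀ x, (x, x) ∈ ρ := eq_univ_iff_forall.1 hR
    obtain ⟨z, hz⟩ := (hsole _ (hdiag a)).exists_notMem_diag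
    exact hz (hdiag z)
  · rintro ⟨a, b⟩ ⟨hab, hne⟩
    exact ⟨(harc a b hab hne).1, (harc a b hab hne).2.1⟩
  · intro x y hx hy hxy
    rcases coversPairs_iff.1 hρ x y hxy with h | h | h | h
    · exact .inl ⟨⟨h, hxy⟩, fun h' => (harc x y h hxy).2.2 h'.1⟩
    · exact .inr ⟨fun h' => (harc y x h hxy.symm).2.2 h'.1, h, hxy.symm⟩
    · exact absurd h hx
    · exact absurd h hy
  · ext ⟨a, b⟩
    by_cases hab : a = b
    · subst hab; simp
    · simp [hab]

end Set

open Set in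
/-- Let `X` have at least two elements and let `ρ` be a binary relation on `X` such that
for every two distinct `x, y` at least one of `(x,y), (y,x), (x,x), (y,y)` belongs to `ρ`.
Then `ρ` is minimal with this property iff `ρ = σ ∪ Δ_R` for some proper subset `R ⊊ X`
and some tournament `σ` on `X ∖ R` (an irreflexive relation such that for all distinct
`x, y ∈ X ∖ R` exactly one of `(x,y) ∈ σ`, `(y,x) ∈ σ` holds). -/
theorem stmt_17 {X : Type*} (hX : (2 : Cardinal) ≤ Cardinal.mk X)
    (ρ : Set (X × X))
    (hρ : ∀ x y : X, x ≠ y →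
      ((x, y) ∈ ρ ∨ (y, x) ∈ ρ ∨ (x, x) ∈ ρ ∨ (y, y) ∈ ρ)) :
    (¬∃ ρ' : Set (X × X), ρ' ⊂ ρ ∧ ∀ x y : X, x ≠ y →
        ((x, y) ∈ ρ' ∨ (y, x) ∈ ρ' ∨ (x, x) ∈ ρ' ∨ (y, y) ∈ ρ')) ↔
      ∃ R : Set X, R ≠ Set.univ ∧ ∃ σ : Set (X × X),
        (∀ p ∈ σ, p.1 ∉ R ∧ p.2 ∉ R) ∧
        (∀ x : X, (x, x) ∉ σ) ∧
        (∀ x y : X, x ∉ R → y ∉ R → x ≠ y →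
          ((x, y) ∈ σ ∧ (y, x) ∉ σ) ∨ ((x, y) ∉ σ ∧ (y, x) ∈ σ)) ∧
        ρ = σ ∪ {p : X × X | p.1 = p.2 ∧ p.1 ∈ R} := by
  have hcov : CoversPairs ρ := coversPairs_iff.2 hρ
  have hmin := not_exists_ssubset_coversPairs_iff hcov
  simp only [coversPairs_iff] at hmin
  rw [hmin]
  obtain ⟨x, -, -⟩ := Cardinal.two_le_iff.1 hX
  have : Nonempty X := ⟨x⟩
  constructor
  · exact exists_tournament_union_diag_of_forall_isSoleWitness hcov
  · rintro ⟨R, hR, σ, hσR, hirr, htour, rfl⟩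
    refine isSoleWitness_of_asymm_union_diag hR hσR hirr fun x y hxy => ?_
    have hne : x ≠ y := by rintro rfl; exact hirr x hxy
    rcases htour x y (hσR _ hxy).1 (hσR _ hxy).2 hne with h | h
    exacts [h.2, absurd hxy h.1]
end

section
/- Let G be a simple graph in which every vertex has at most two neighbors. Then G is a maximal element of the set of graphs of degree ≤ 2 on its vertex set (no graph on the same vertex set with all degrees ≤ 2 properly extends G edge-wise) if and only if G is isomorphic to a disjoint union Y ⊔ Z where: Y is either the empty graph on the empty vertex set or a 2-regular graph (every vertex has exactly two neighbors), and Z is either the empty graph on the empty vertex set, the one-vertex graph K₁, the single edge K₂, or the one-way infinite path G_ω (the graph on ℕ in which k and l are adjacent iff |k − l| = 1). -/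
universe u

section Helpers
open SimpleGraph Set

variable {V : Type u} {G : SimpleGraph V}



lemma nbhd_sup_edge (u v w : V) :
    (G ⊔ edge u v).neighborSet w = G.neighborSet w ∪ (edge u v).neighborSet w := by
  ext x; simp [mem_neighborSet, sup_adj]

lemma edge_nbhd_card (u v w : V) (h : u ≠ v) : ((edge u v).neighborSet w).encard ≤ 1 := by
  rcases eq_or_ne w u with rfl | hu
  · have : (edge w v).neighborSet w = {v} := by
      ext x; simp [mem_neighborSet, edge_adj]; aesop
    simp [this]
  rcases eq_or_ne w v with rfl | hv
  · have : (edge u w).neighborSet w = {u} := by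
      ext x; simp [mem_neighborSet, edge_adj]; aesop
    simp [this]
  · have : (edge u v).neighborSet w = ∅ := by
      ext x; simp [mem_neighborSet, edge_adj]; aesop
    simp [this]

lemma addEdge_contr (hdeg : ∀ v : V, (G.neighborSet v).encard ≤ 2) (hmax : ¬∃ H : SimpleGraph V, G < H ∧ ∀ v : V, (H.neighborSet v).encard ≤ 2)
    {u v : V} (hu : (G.neighborSet u).encard ≤ 1) (hv : (G.neighborSet v).encard ≤ 1)
    (hne : u ≠ v) (hnadj : ¬ G.Adj u v) : False := by
  apply hmax
  refine ⟨G ⊔ edge u v, ?_, ?_⟩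
  · refine lt_of_le_of_ne le_sup_left ?_
    intro h
    exact hnadj (h ▸ (sup_adj ..).2 (Or.inr ((edge_adj (s := u) (t := v) u v).mpr ⟨Or.inl ⟨rfl, rfl⟩, hne⟩)))
  · intro w
    rw [nbhd_sup_edge]
    calc (G.neighborSet w ∪ (edge u v).neighborSet w).encard
        ≤ (G.neighborSet w).encard + ((edge u v).neighborSet w).encard := Set.encard_union_le _ _
      _ ≤ 2 := by
        rcases eq_or_ne w u with rfl | hwu
        · calc _ ≤ 1 + 1 := add_le_add hu (edge_nbhd_card w v w hne)
            _ = 2 := by norm_num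
        rcases eq_or_ne w v with rfl | hwv
        · calc _ ≤ 1 + 1 := add_le_add hv (edge_nbhd_card u w w hne)
            _ = 2 := by norm_num
        · have : (edge u v).neighborSet w = ∅ := by
            ext x; simp [mem_neighborSet, edge_adj]; aesop
          rw [this]; simpa using hdeg w


lemma induce_nbhd_encard (s : Set V) (hcl : ∀ {u w}, u ∈ s → G.Adj u w → w ∈ s) (a : s) :
    ((G.induce s).neighborSet a).encard = (G.neighborSet (a : V)).encard := by
  have h1 : (G.induce s).neighborSet a = Subtype.val ⁻¹' (G.neighborSet (a : V)) := by
    ext ⟨x, hx⟩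
    simp [mem_neighborSet, comap_adj]
  have h2 : (Subtype.val : s → V) '' (Subtype.val ⁻¹' (G.neighborSet (a : V)))
      = G.neighborSet (a : V) := by
    rw [Set.image_preimage_eq_inter_range, Subtype.range_coe]
    exact Set.inter_eq_left.mpr (fun w hw => hcl a.2 hw)
  rw [h1, ← Subtype.val_injective.encard_image, h2]

noncomputable def splitIso (B : Set V) (hcross : ∀ {u w}, G.Adj u w → u ∈ B → w ∈ B) :
    G ≃g ((G.induce Bᶜ) ⊕g (G.induce B)) := by
  classical
  exact {
    toFun := fun v => if h : v ∈ B then Sum.inr ⟨v, h⟩ else Sum.inl ⟨v, h⟩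
    invFun := fun x => x.elim Subtype.val Subtype.val
    left_inv := fun v => by by_cases h : v ∈ B <;> simp [h]
    right_inv := fun x => by
      rcases x with ⟨a, ha⟩ | ⟨a, ha⟩
      · have ha' : a ∉ B := ha
        simp [ha']
      · simp [ha]
    map_rel_iff' := by
      intro a b
      by_cases ha : a ∈ B <;> by_cases hb : b ∈ B <;> simp [ha, hb, comap_adj]
      · exact fun h => hb (hcross h ha)
      · exact fun h => ha (hcross h.symm hb) }


lemma iso_nbhd_encard {W : Type*} {H : SimpleGraph W} (f : G ≃g H) (v : V) :
    (H.neighborSet (f v)).encard = (G.neighborSet v).encard :=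
  (Set.encard_congr (f.mapNeighborSet v)).symm

lemma sum_nbhd_inl {A B : Type u} (Y : SimpleGraph A) (Z : SimpleGraph B) (a : A) :
    ((Y ⊕g Z).neighborSet (Sum.inl a)).encard = (Y.neighborSet a).encard := by
  have : (Y ⊕g Z).neighborSet (Sum.inl a) = Sum.inl '' (Y.neighborSet a) := by
    ext x; cases x <;> simp [mem_neighborSet]
  rw [this, Sum.inl_injective.encard_image]

lemma sum_nbhd_inr {A B : Type u} (Y : SimpleGraph A) (Z : SimpleGraph B) (b : B) :
    ((Y ⊕g Z).neighborSet (Sum.inr b)).encard = (Z.neighborSet b).encard := by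
  have : (Y ⊕g Z).neighborSet (Sum.inr b) = Sum.inr '' (Z.neighborSet b) := by
    ext x; cases x <;> simp [mem_neighborSet]
  rw [this, Sum.inr_injective.encard_image]

lemma ray_nbhd_zero : (SimpleGraph.fromRel (fun k l : ℕ => l = k + 1)).neighborSet 0 = {1} := by
  ext x; simp [mem_neighborSet, fromRel_adj]; omega

lemma ray_nbhd_succ (k : ℕ) :
    (SimpleGraph.fromRel (fun k l : ℕ => l = k + 1)).neighborSet (k + 1) = {k, k + 2} := by
  ext x; simp [mem_neighborSet, fromRel_adj]; omega

lemma enat_peel {x : ℕ∞} (h : x + 1 ≤ 2) : x ≤ 1 := by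
  have : x + 1 ≤ 1 + 1 := by norm_num at h ⊢; exact h
  exact (WithTop.add_le_add_iff_right (by norm_num : (1:ℕ∞) ≠ ⊤)).mp this

lemma backward_dir (hdeg : ∀ v : V, (G.neighborSet v).encard ≤ 2)
    {A B : Type u} {Y : SimpleGraph A} {Z : SimpleGraph B} (e : G ≃g (Y ⊕g Z))
    (hY : IsEmpty A ∨ ∀ a : A, (Y.neighborSet a).encard = 2)
    (hZ : IsEmpty B ∨
          Nonempty (Z ≃g (⊥ : SimpleGraph (Fin 1))) ∨
          Nonempty (Z ≃g (⊤ : SimpleGraph (Fin 2))) ∨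
          Nonempty (Z ≃g SimpleGraph.fromRel (fun k l : ℕ => l = k + 1))) :
    ¬∃ H : SimpleGraph V, G < H ∧ ∀ v : V, (H.neighborSet v).encard ≤ 2 := by
  rintro ⟨H, hlt, hH⟩
  obtain ⟨u, w, hadj, hnadj⟩ : ∃ u w, H.Adj u w ∧ ¬ G.Adj u w := by
    by_contra hc
    push_neg at hc
    exact hlt.not_ge (fun a b hab => hc a b hab)
  have key : ∀ x y : V, H.Adj x y → ¬ G.Adj x y → (G.neighborSet x).encard ≤ 1 := by
    intro x y hxy hng
    have hsub : insert y (G.neighborSet x) ⊆ H.neighborSet x := by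
      intro z hz
      rcases hz with rfl | hz
      · exact hxy
      · exact hlt.le hz
    have h2 : (insert y (G.neighborSet x)).encard ≤ 2 := le_trans (Set.encard_mono hsub) (hH x)
    have hy : y ∉ G.neighborSet x := hng
    rw [Set.encard_insert_of_notMem hy] at h2
    exact enat_peel h2
  have hu1 : (G.neighborSet u).encard ≤ 1 := key u w hadj hnadj
  have hw1 : (G.neighborSet w).encard ≤ 1 := key w u hadj.symm (fun h => hnadj h.symm)
  -- vertices of degree ≤ 1 map into Z
  have toZ : ∀ x : V, (G.neighborSet x).encard ≤ 1 → ∃ b : B, e x = Sum.inr b := by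
    intro x hx
    rcases hex : e x with a | b
    · exfalso
      rcases hY with hA | hY
      · exact hA.elim a
      · have := iso_nbhd_encard e x
        rw [hex, sum_nbhd_inl, hY a] at this
        rw [← this] at hx
        norm_num at hx
    · exact ⟨b, rfl⟩
  obtain ⟨b1, hb1⟩ := toZ u hu1
  obtain ⟨b2, hb2⟩ := toZ w hw1
  have hbne : b1 ≠ b2 := by
    intro h
    exact hadj.ne (e.injective (by rw [hb1, hb2, h]))
  have hbnadj : ¬ Z.Adj b1 b2 := by
    intro h
    apply hnadj
    have : (Y ⊕g Z).Adj (e u) (e w) := by rw [hb1, hb2]; simpa using h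
    exact e.map_rel_iff.mp this
  have hz1 : (Z.neighborSet b1).encard ≤ 1 := by
    have := iso_nbhd_encard e u; rw [hb1, sum_nbhd_inr] at this; rw [this]; exact hu1
  have hz2 : (Z.neighborSet b2).encard ≤ 1 := by
    have := iso_nbhd_encard e w; rw [hb2, sum_nbhd_inr] at this; rw [this]; exact hw1
  rcases hZ with hB | ⟨⟨f⟩⟩ | ⟨⟨f⟩⟩ | ⟨⟨f⟩⟩
  · exact hB.elim b1
  · exact hbne (f.injective (Subsingleton.elim _ _))
  · exact hbnadj (f.map_rel_iff.mp (by simpa using hbne))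
  · have ray0 : ∀ b : B, (Z.neighborSet b).encard ≤ 1 → f b = 0 := by
      intro b hb
      have hd := iso_nbhd_encard f b
      rcases hfb : f b with _ | k
      · rfl
      · exfalso
        rw [hfb, ray_nbhd_succ] at hd
        rw [← hd] at hb
        rw [Set.encard_pair (by omega)] at hb
        norm_num at hb
    exact hbne (f.injective (by rw [ray0 b1 hz1, ray0 b2 hz2]))

lemma assemble (B : Set V) (hcl : ∀ {a w}, G.Adj a w → a ∈ B → w ∈ B)
    (hA : ∀ w, w ∉ B → (G.neighborSet w).encard = 2)
    (hZc : IsEmpty ↥B ∨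
        Nonempty (G.induce B ≃g (⊥ : SimpleGraph (Fin 1))) ∨
        Nonempty (G.induce B ≃g (⊤ : SimpleGraph (Fin 2))) ∨
        Nonempty (G.induce B ≃g SimpleGraph.fromRel (fun k l : ℕ => l = k + 1))) :
    ∃ (A B' : Type u) (Y : SimpleGraph A) (Z : SimpleGraph B'),
        Nonempty (G ≃g (Y ⊕g Z)) ∧
        (IsEmpty A ∨ ∀ a : A, (Y.neighborSet a).encard = 2) ∧
        (IsEmpty B' ∨
          Nonempty (Z ≃g (⊥ : SimpleGraph (Fin 1))) ∨
          Nonempty (Z ≃g (⊤ : SimpleGraph (Fin 2))) ∨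
          Nonempty (Z ≃g SimpleGraph.fromRel (fun k l : ℕ => l = k + 1))) := by
  refine ⟨↥Bᶜ, ↥B, G.induce Bᶜ, G.induce B, ⟨splitIso B hcl⟩, Or.inr ?_, hZc⟩
  intro a
  rw [induce_nbhd_encard Bᶜ (fun hu hadj hw => hu (hcl hadj.symm hw))]
  exact hA a a.2



lemma deg_two (hdeg : ∀ v : V, (G.neighborSet v).encard ≤ 2) {w : V}
    (h : ¬ (G.neighborSet w).encard ≤ 1) : (G.neighborSet w).encard = 2 := by
  refine le_antisymm (hdeg w) ?_
  rw [show (2:ℕ∞) = 1 + 1 by norm_num]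
  exact (ENat.add_one_le_iff (by norm_num)).mpr (lt_of_not_ge h)

lemma exists_other {w y : V} (h2 : (G.neighborSet w).encard = 2) (hy : y ∈ G.neighborSet w) :
    ∃ z, G.Adj w z ∧ z ≠ y := by
  obtain ⟨a, b, hab, hset⟩ := Set.encard_eq_two.mp h2
  rcases hset ▸ hy with rfl | rfl
  · exact ⟨b, by rw [← mem_neighborSet, hset]; exact Or.inr rfl, hab.symm⟩
  · exact ⟨a, by rw [← mem_neighborSet, hset]; exact Or.inl rfl, hab⟩

lemma nbhd_pair {w y z : V} (h2 : (G.neighborSet w).encard = 2) (hy : y ∈ G.neighborSet w)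
    (hz : z ∈ G.neighborSet w) (hne : y ≠ z) : G.neighborSet w = {y, z} := by
  have hfin : (G.neighborSet w).Finite := Set.finite_of_encard_eq_coe (by exact_mod_cast h2)
  refine (hfin.eq_of_subset_of_encard_le' (Set.insert_subset hy (Set.singleton_subset_iff.mpr hz))
    ?_).symm
  rw [h2, Set.encard_pair hne]

lemma nbhd_single {w y : V} (h1 : (G.neighborSet w).encard ≤ 1) (hy : y ∈ G.neighborSet w) :
    G.neighborSet w = {y} := by
  ext z
  constructor
  · exact fun hz => Set.encard_le_one_iff.mp h1 z y hz hy
  · rintro rfl; exact hy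

open Classical in
noncomputable def nextOf (G : SimpleGraph V) (w u : V) : V :=
  if h : ∃ z, G.Adj w z ∧ z ≠ u then h.choose else w

lemma nextOf_spec {w u : V} (h : ∃ z, G.Adj w z ∧ z ≠ u) :
    G.Adj w (nextOf G w u) ∧ nextOf G w u ≠ u := by
  classical
  rw [nextOf]
  rw [dif_pos h]
  exact h.choose_spec

noncomputable def raySeq (G : SimpleGraph V) (v : V) : ℕ → V × V
  | 0 => (v, nextOf G v v)
  | n+1 => ((raySeq G v n).2, nextOf G (raySeq G v n).2 (raySeq G v n).1)

lemma raySeq_props (hdeg : ∀ v : V, (G.neighborSet v).encard ≤ 2) {v : V}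
    (hSv : ∀ w, (G.neighborSet w).encard ≤ 1 → w = v)
    (hv1 : (G.neighborSet v).encard = 1) :
    ∀ n : ℕ, (∀ k, k < n → G.Adj ((raySeq G v k).1) ((raySeq G v (k+1)).1)
        ∧ (raySeq G v (k+2)).1 ≠ (raySeq G v k).1)
      ∧ Set.InjOn (fun n => (raySeq G v n).1) {k | k ≤ n} := by
  classical
  set x : ℕ → V := fun n => (raySeq G v n).1 with hxdef
  have hx0 : x 0 = v := rfl
  have hxs : ∀ n, x (n+2) = nextOf G (x (n+1)) (x n) := fun n => rfl
  have hx1 : x 1 = nextOf G v v := rfl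
  have deg2 : ∀ w : V, w ≠ v → (G.neighborSet w).encard = 2 :=
    fun w hw => deg_two hdeg (fun h => hw (hSv w h))
  obtain ⟨z0, hz0⟩ := Set.encard_eq_one.mp hv1
  have hz0adj : G.Adj v z0 := by rw [← mem_neighborSet, hz0]; rfl
  have hex0 : ∃ z, G.Adj v z ∧ z ≠ v := ⟨z0, hz0adj, hz0adj.ne'⟩
  have hadj01 : G.Adj (x 0) (x 1) := (nextOf_spec hex0).1
  have hN0 : G.neighborSet v = {x 1} := nbhd_single hv1.le hadj01
  intro n
  induction n with
  | zero =>
    refine ⟨fun k hk => absurd hk (Nat.not_lt_zero k), ?_⟩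
    intro a ha b hb _
    simp only [Set.mem_setOf_eq, Nat.le_zero] at ha hb
    rw [ha, hb]
  | succ m ih =>
    obtain ⟨hchain, hinj⟩ := ih
    -- new adjacency : Adj (x m) (x (m+1))
    have hadjm : G.Adj (x m) (x (m+1)) := by
      match m with
      | 0 => exact hadj01
      | Nat.succ l =>
        have hlv : x (l+1) ≠ v := by
          intro h
          have : l + 1 = 0 := hinj (by simp : l+1 ∈ {k | k ≤ l+1}) (by simp : 0 ∈ {k | k ≤ l+1}) h
          omega
        have hmem : x l ∈ G.neighborSet (x (l+1)) := (hchain l (by omega)).1.symm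
        have hex : ∃ z, G.Adj (x (l+1)) z ∧ z ≠ x l := exists_other (deg2 _ hlv) hmem
        rw [hxs l]
        exact (nextOf_spec hex).1
    -- injectivity extension
    have hnew : ∀ j, j ≤ m → x (m+1) ≠ x j := by
      intro j hj heq
      rcases eq_or_ne j m with rfl | hjm
      · exact hadjm.ne' heq
      rcases Nat.eq_zero_or_pos j with rfl | hjpos
      · -- x (m+1) = v, m ≥ 1
        have hm1 : 1 ≤ m := by omega
        have hmem : x m ∈ G.neighborSet v := by
          rw [← hx0, ← heq] at *
          exact hadjm.symm
        rw [hN0] at hmem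
        have : m = 1 := hinj (by simp : m ∈ {k | k ≤ m}) (by simp [hm1] : 1 ∈ {k | k ≤ m}) hmem
        subst this
        exact (hchain 0 (by omega)).2 (by exact heq)
      · -- 1 ≤ j < m
        obtain ⟨i, rfl⟩ : ∃ i, j = i + 1 := ⟨j - 1, by omega⟩
        have hiv : x (i+1) ≠ v := by
          intro h
          have : i + 1 = 0 := hinj (by simp; omega : i+1 ∈ {k | k ≤ m}) (by simp : 0 ∈ {k | k ≤ m}) (by rw [h, hx0])
          omega
        have hi2m : i + 2 ≤ m := by omega
        have hmem1 : x i ∈ G.neighborSet (x (i+1)) := (hchain i (by omega)).1.symm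
        have hmem2 : x (i+2) ∈ G.neighborSet (x (i+1)) := (hchain (i+1) (by omega)).1
        have hne12 : x i ≠ x (i+2) := fun h =>
          (by omega : i ≠ i + 2) (hinj (by simp; omega : i ∈ {k | k ≤ m}) (by simp; omega : i+2 ∈ {k | k ≤ m}) h)
        have hNj : G.neighborSet (x (i+1)) = {x i, x (i+2)} :=
          nbhd_pair (deg2 _ hiv) hmem1 hmem2 hne12
        have hmm : x m ∈ G.neighborSet (x (i+1)) := by rw [← heq]; exact hadjm.symm
        rw [hNj] at hmm
        rcases hmm with hmm | hmm
        · have : m = i := hinj (by simp : m ∈ {k | k ≤ m}) (by simp; omega : i ∈ {k | k ≤ m}) hmm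
          omega
        · have : m = i + 2 := hinj (by simp : m ∈ {k | k ≤ m}) (by simp; omega : i+2 ∈ {k | k ≤ m}) hmm
          subst this
          exact (hchain (i+1) (by omega)).2 heq
    have hinj' : Set.InjOn x {k | k ≤ m + 1} := by
      intro a ha b hb h
      simp only [Set.mem_setOf_eq] at ha hb
      rcases eq_or_ne a (m+1) with rfl | ha'
      · rcases eq_or_ne b (m+1) with rfl | hb'
        · rfl
        · exact absurd h (hnew b (by omega))
      · rcases eq_or_ne b (m+1) with rfl | hb'
        · exact absurd h.symm (hnew a (by omega))
        · exact hinj (by simp; omega) (by simp; omega) h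
    -- new non-equality : x (m+2) ≠ x m
    have hnoteq : x (m+2) ≠ x m := by
      have hmv : x (m+1) ≠ v := by
        intro h
        have : m + 1 = 0 := hinj' (by simp : m+1 ∈ {k | k ≤ m+1}) (by simp : 0 ∈ {k | k ≤ m+1}) (by rw [h, hx0])
        omega
      have hmem : x m ∈ G.neighborSet (x (m+1)) := hadjm.symm
      have hex : ∃ z, G.Adj (x (m+1)) z ∧ z ≠ x m := exists_other (deg2 _ hmv) hmem
      rw [hxs m]
      exact (nextOf_spec hex).2
    refine ⟨?_, hinj'⟩
    intro k hk
    rcases Nat.lt_succ_iff_lt_or_eq.mp hk with hk' | rfl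
    · exact hchain k hk'
    · exact ⟨hadjm, hnoteq⟩

lemma caseD (hdeg : ∀ v : V, (G.neighborSet v).encard ≤ 2) {v : V}
    (hSv : ∀ w, (G.neighborSet w).encard ≤ 1 → w = v)
    (hv1 : (G.neighborSet v).encard = 1) :
    ∃ (A B' : Type u) (Y : SimpleGraph A) (Z : SimpleGraph B'),
        Nonempty (G ≃g (Y ⊕g Z)) ∧
        (IsEmpty A ∨ ∀ a : A, (Y.neighborSet a).encard = 2) ∧
        (IsEmpty B' ∨
          Nonempty (Z ≃g (⊥ : SimpleGraph (Fin 1))) ∨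
          Nonempty (Z ≃g (⊤ : SimpleGraph (Fin 2))) ∨
          Nonempty (Z ≃g SimpleGraph.fromRel (fun k l : ℕ => l = k + 1))) := by
  classical
  set x : ℕ → V := fun n => (raySeq G v n).1 with hxdef
  have hx0 : x 0 = v := rfl
  have deg2 : ∀ w : V, w ≠ v → (G.neighborSet w).encard = 2 :=
    fun w hw => deg_two hdeg (fun h => hw (hSv w h))
  obtain ⟨z0, hz0⟩ := Set.encard_eq_one.mp hv1
  have hz0adj : G.Adj v z0 := by rw [← mem_neighborSet, hz0]; rfl
  have hex0 : ∃ z, G.Adj v z ∧ z ≠ v := ⟨z0, hz0adj, hz0adj.ne'⟩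
  have hadj01 : G.Adj (x 0) (x 1) := (nextOf_spec hex0).1
  have hN0 : G.neighborSet v = {x 1} := nbhd_single hv1.le hadj01
  have props := raySeq_props hdeg hSv hv1
  have hchain : ∀ k, G.Adj (x k) (x (k+1)) := fun k => ((props (k+1)).1 k (Nat.lt_succ_self k)).1
  have hinj : Function.Injective x := by
    intro a b h
    exact (props (max a b)).2 (by simp : a ∈ {k | k ≤ max a b})
      (by simp : b ∈ {k | k ≤ max a b}) h
  have hxv : ∀ k, x (k+1) ≠ v := by
    intro k h
    have : k + 1 = 0 := hinj (show x (k+1) = x 0 from h.trans hx0.symm)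
    omega
  have hNs : ∀ k, G.neighborSet (x (k+1)) = {x k, x (k+2)} := fun k =>
    nbhd_pair (deg2 _ (hxv k)) (hchain k).symm (hchain (k+1))
      (fun h => by have := hinj h; omega)
  have hadjiff : ∀ k l, G.Adj (x k) (x l) ↔ (l = k+1 ∨ k = l+1) := by
    intro k l
    constructor
    · intro h
      match k with
      | 0 =>
        have hm : x l ∈ ({x 1} : Set V) := by rw [← hN0]; exact (hx0 ▸ h : G.Adj v (x l))
        have := hinj (Set.mem_singleton_iff.mp hm)
        omega
      | Nat.succ m =>
        have hm : x l ∈ ({x m, x (m+2)} : Set V) := by rw [← hNs m]; exact h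
        rcases hm with h' | h'
        · right; have := hinj h'; omega
        · left; have := hinj h'; omega
    · rintro (rfl | rfl)
      · exact hchain k
      · exact (hchain l).symm
  apply assemble (Set.range x)
  · rintro a w hadj ⟨n, rfl⟩
    match n with
    | 0 =>
      have hm : w ∈ G.neighborSet v := (hx0 ▸ hadj : G.Adj v w)
      rw [hN0] at hm
      exact ⟨1, (Set.mem_singleton_iff.mp hm).symm⟩
    | Nat.succ m =>
      have hm : w ∈ ({x m, x (m+2)} : Set V) := by rw [← hNs m]; exact hadj
      rcases hm with h' | h'
      · exact ⟨m, h'.symm⟩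
      · exact ⟨m + 2, h'.symm⟩
  · intro w hw
    exact deg2 w (fun h => hw (h ▸ ⟨0, hx0⟩))
  · refine Or.inr (Or.inr (Or.inr ⟨RelIso.symm ⟨Equiv.ofInjective x hinj, ?_⟩⟩))
    intro k l
    simp only [comap_adj, Function.Embedding.coe_subtype, Equiv.ofInjective_apply, fromRel_adj]
    constructor
    · intro h
      have h' := (hadjiff k l).mp h
      exact ⟨by omega, h'⟩
    · rintro ⟨-, h⟩
      exact (hadjiff k l).mpr h

noncomputable def k2Iso {u v : V} (hneuv : u ≠ v) (huv : G.Adj u v) :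
    G.induce {u, v} ≃g (⊤ : SimpleGraph (Fin 2)) := by
  classical
  exact {
    toFun := fun a => if (a : V) = u then 0 else 1
    invFun := fun i => if i = 0 then ⟨u, Set.mem_insert u {v}⟩
      else ⟨v, Set.mem_insert_of_mem u rfl⟩
    left_inv := fun a => by
      obtain ⟨w, hw⟩ := a
      rcases hw with rfl | hw
      · simp
      · rw [Set.mem_singleton_iff] at hw; subst hw
        simp [hneuv.symm, Fin.ext_iff]
    right_inv := fun i => by
      fin_cases i
      · simp
      · simp [hneuv.symm, Fin.ext_iff]
    map_rel_iff' := by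
      rintro ⟨a, ha⟩ ⟨b, hb⟩
      rcases ha with rfl | ha <;> rcases hb with rfl | hb
      · simp [comap_adj]
      · rw [Set.mem_singleton_iff] at hb; subst hb
        simp [comap_adj, hneuv.symm, huv]
      · rw [Set.mem_singleton_iff] at ha; subst ha
        simp [comap_adj, hneuv.symm, huv.symm]
      · rw [Set.mem_singleton_iff] at ha hb; subst ha; subst hb
        simp [comap_adj, hneuv.symm] }


end Helpers

open SimpleGraph Set in
/-- A simple graph `G` in which every vertex has at most two neighbors is maximal among
graphs of degree `≤ 2` on its vertex set iff `G` is isomorphic to a disjoint union `Y ⊕g Z`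
where `Y` is the empty graph on the empty vertex set or a 2-regular graph, and `Z` is the
empty graph on the empty vertex set, `K₁`, `K₂`, or the one-way infinite path on `ℕ`. -/
theorem stmt_18 {V : Type u} (G : SimpleGraph V)
    (hdeg : ∀ v : V, (G.neighborSet v).encard ≤ 2) :
    (¬∃ H : SimpleGraph V, G < H ∧ ∀ v : V, (H.neighborSet v).encard ≤ 2) ↔
      ∃ (A B : Type u) (Y : SimpleGraph A) (Z : SimpleGraph B),
        Nonempty (G ≃g (Y ⊕g Z)) ∧
        (IsEmpty A ∨ ∀ a : A, (Y.neighborSet a).encard = 2) ∧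
        (IsEmpty B ∨
          Nonempty (Z ≃g (⊥ : SimpleGraph (Fin 1))) ∨
          Nonempty (Z ≃g (⊤ : SimpleGraph (Fin 2))) ∨
          Nonempty (Z ≃g SimpleGraph.fromRel (fun k l : ℕ => l = k + 1))) := by
  constructor
  · intro hmax
    by_cases hS0 : ∀ w : V, ¬ (G.neighborSet w).encard ≤ 1
    · apply assemble ∅
      · intro a w _ ha
        exact absurd ha (Set.notMem_empty a)
      · intro w _
        exact deg_two hdeg (hS0 w)
      · exact Or.inl (Set.isEmpty_coe_sort.mpr rfl)
    · push_neg at hS0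
      obtain ⟨v, hv⟩ := hS0
      have hadjS : ∀ a b : V, (G.neighborSet a).encard ≤ 1 → (G.neighborSet b).encard ≤ 1 →
          a ≠ b → G.Adj a b := by
        intro a b ha hb hne
        by_contra hn
        exact addEdge_contr hdeg hmax ha hb hne hn
      by_cases huniq : ∀ w, (G.neighborSet w).encard ≤ 1 → w = v
      · rcases Set.encard_le_one_iff_eq.mp hv with h0 | ⟨z, hz⟩
        · -- isolated vertex : K₁ case
          apply assemble {v}
          · intro a w hadj ha
            rw [Set.mem_singleton_iff] at ha; subst ha
            have hm : w ∈ G.neighborSet a := hadj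
            rw [h0] at hm
            exact hm.elim
          · intro w hw
            rw [Set.mem_singleton_iff] at hw
            exact deg_two hdeg (fun h => hw (huniq w h))
          · refine Or.inr (Or.inl ⟨⟨Equiv.ofUnique _ _, ?_⟩⟩)
            intro a b
            simp [Subsingleton.elim a b, comap_adj]
        · exact caseD hdeg huniq (by rw [hz]; simp)
      · push_neg at huniq
        obtain ⟨u, hu, hne⟩ := huniq
        have huv : G.Adj u v := hadjS u v hu hv hne
        have hNu : G.neighborSet u = {v} := nbhd_single hu huv
        have hNv : G.neighborSet v = {u} := nbhd_single hv huv.symm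
        apply assemble {u, v}
        · intro a w hadj ha
          rcases ha with rfl | ha
          · have : w ∈ G.neighborSet a := hadj
            rw [hNu] at this
            exact Or.inr this
          · rw [Set.mem_singleton_iff] at ha; subst ha
            have : w ∈ G.neighborSet a := hadj
            rw [hNv] at this
            exact Or.inl this
        · intro w hw
          refine deg_two hdeg (fun h => hw ?_)
          by_contra hc
          rw [Set.mem_insert_iff, Set.mem_singleton_iff] at hc
          push_neg at hc
          have h1 : G.Adj w u := hadjS w u h hu hc.1
          have h2 : G.Adj w v := hadjS w v h hv hc.2
          exact hne (Set.encard_le_one_iff.mp h u v h1 h2)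
        · exact Or.inr (Or.inr (Or.inl ⟨k2Iso hne huv⟩))
  · rintro ⟨A, B, Y, Z, ⟨e⟩, hY, hZ⟩
    exact backward_dir hdeg e hY hZ
end

section
/- Let C be the set of all equivalence relations E on ℕ such that for every positive integer n, E has exactly one equivalence class with exactly n elements (and possibly some infinite classes). Then for E ∈ C: (i) E is a maximal element of (C, ⊆) if and only if E has at most one infinite equivalence class; (ii) E is a minimal element of (C, ⊆) if and only if E has no infinite equivalence class. -/
/-- The set of all equivalence relations on `ℕ` (viewed as sets of pairs) having, for every
positive integer `n`, exactly one equivalence class with exactly `n` elements. -/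
def ClassC : Set (Set (ℕ × ℕ)) :=
  {E | Equivalence (fun x y => (x, y) ∈ E) ∧
    ∀ n : ℕ, 0 < n →
      ∃! c : Set ℕ, (∃ x : ℕ, c = {y | (x, y) ∈ E}) ∧ c.encard = n}

namespace Stmt19Aux

/-- The class of `x`. -/
def cls (E : Set (ℕ × ℕ)) (x : ℕ) : Set ℕ := {y | (x, y) ∈ E}

lemma mem_cls {E : Set (ℕ × ℕ)} {x y : ℕ} : y ∈ cls E x ↔ (x, y) ∈ E := Iff.rfl

lemma mem_cls_self {E : Set (ℕ × ℕ)} (hE : Equivalence fun x y => (x, y) ∈ E) (x : ℕ) :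
    x ∈ cls E x := hE.refl x

lemma cls_eq_of_mem {E : Set (ℕ × ℕ)} (hE : Equivalence fun x y => (x, y) ∈ E) {x y : ℕ}
    (hy : y ∈ cls E x) : cls E y = cls E x := by
  ext z
  exact ⟨fun hz => hE.trans hy hz, fun hz => hE.trans (hE.symm hy) hz⟩

lemma cls_eq_of_encard_eq {E : Set (ℕ × ℕ)} (hE : E ∈ ClassC) {x y : ℕ} {n : ℕ} (hn : 0 < n)
    (hx : (cls E x).encard = n) (hy : (cls E y).encard = n) : cls E x = cls E y := by
  obtain ⟨c, _, hu⟩ := hE.2 n hn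
  have h1 := hu (cls E x) ⟨⟨x, rfl⟩, hx⟩
  have h2 := hu (cls E y) ⟨⟨y, rfl⟩, hy⟩
  rw [h1, h2]

lemma exists_cls_encard {E : Set (ℕ × ℕ)} (hE : E ∈ ClassC) {n : ℕ} (hn : 0 < n) :
    ∃ x : ℕ, (cls E x).encard = n := by
  obtain ⟨c, ⟨⟨x, rfl⟩, hc⟩, _⟩ := hE.2 n hn
  exact ⟨x, hc⟩

lemma encard_pos {E : Set (ℕ × ℕ)} (hE : Equivalence fun x y => (x, y) ∈ E) (x : ℕ) :
    1 ≤ (cls E x).encard :=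
  Set.one_le_encard_iff_nonempty.2 ⟨x, mem_cls_self hE x⟩

lemma pos_of_encard_eq {E : Set (ℕ × ℕ)} (hE : Equivalence fun x y => (x, y) ∈ E) {x : ℕ}
    {n : ℕ} (hx : (cls E x).encard = n) : 0 < n := by
  have := encard_pos hE x
  rw [hx] at this
  exact_mod_cast this

/-- If `E ⊆ F` are both in `ClassC`, then finite `E`-classes are `F`-classes. -/
lemma key_up {E F : Set (ℕ × ℕ)} (hE : E ∈ ClassC) (hF : F ∈ ClassC) (hEF : E ⊆ F) :
    ∀ n : ℕ, ∀ x : ℕ, (cls E x).encard = n → cls F x = cls E x := by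
  intro n
  induction n using Nat.strong_induction_on with
  | _ n ih =>
    intro x hx
    have hn : 0 < n := pos_of_encard_eq hE.1 hx
    -- take the unique F-class of size n
    obtain ⟨w, hw⟩ := exists_cls_encard hF hn
    have hFwfin : (cls F w).Finite := Set.finite_of_encard_eq_coe hw
    have hsub : cls E w ⊆ cls F w := fun z hz => hEF hz
    have hEwfin : (cls E w).Finite := hFwfin.subset hsub
    obtain ⟨m, hm⟩ := hEwfin.exists_encard_eq_coe
    have hmn : m ≤ n := by
      have := Set.encard_mono hsub
      rw [hm, hw] at this
      exact_mod_cast this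
    have hmeq : m = n := by
      by_contra hne
      have hlt : m < n := lt_of_le_of_ne hmn hne
      have := ih m hlt w hm
      rw [this, hm] at hw
      exact hne (by exact_mod_cast hw)
    -- so `cls E w = cls F w`
    have hEw : cls E w = cls F w := by
      apply hEwfin.eq_of_subset_of_encard_le hsub
      rw [hw, hm, hmeq]
    -- `cls E x` and `cls E w` both have size `n`
    have hxw : cls E x = cls E w := cls_eq_of_encard_eq hE hn hx (by rw [hm, hmeq])
    have hxmem : x ∈ cls F w := by
      rw [← hEw, ← hxw]; exact mem_cls_self hE.1 x
    rw [cls_eq_of_mem hF.1 hxmem, ← hEw, ← hxw]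

/-- If `F ⊆ E` are both in `ClassC`, then finite `E`-classes are `F`-classes. -/
lemma key_down {E F : Set (ℕ × ℕ)} (hE : E ∈ ClassC) (hF : F ∈ ClassC) (hFE : F ⊆ E) :
    ∀ n : ℕ, ∀ x : ℕ, (cls E x).encard = n → cls F x = cls E x := by
  intro n
  induction n using Nat.strong_induction_on with
  | _ n ih =>
    intro x hx
    have hn : 0 < n := pos_of_encard_eq hE.1 hx
    have hsub : cls F x ⊆ cls E x := fun z hz => hFE hz
    have hExfin : (cls E x).Finite := Set.finite_of_encard_eq_coe hx
    have hFxfin : (cls F x).Finite := hExfin.subset hsub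
    obtain ⟨m, hm⟩ := hFxfin.exists_encard_eq_coe
    have hmn : m ≤ n := by
      have := Set.encard_mono hsub
      rw [hm, hx] at this
      exact_mod_cast this
    have hmeq : m = n := by
      by_contra hne
      have hlt : m < n := lt_of_le_of_ne hmn hne
      have hmpos : 0 < m := by
        have := Set.one_le_encard_iff_nonempty.2 ⟨x, mem_cls_self hF.1 x⟩
        rw [hm] at this
        exact_mod_cast this
      obtain ⟨z, hz⟩ := exists_cls_encard hE hmpos
      have hFz : cls F z = cls E z := ih m hlt z hz
      -- both `cls F x` and `cls F z` have size m, so they are equal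
      have : cls F x = cls F z := cls_eq_of_encard_eq hF hmpos hm (by rw [hFz]; exact hz)
      -- then `x ∈ cls E z`, so `cls E x = cls E z`, sizes n and m, contradiction
      have hxz : x ∈ cls E z := by
        rw [← hFz, ← this]; exact mem_cls_self hF.1 x
      have := cls_eq_of_mem hE.1 hxz
      rw [← this, hx] at hz
      exact hne (by exact_mod_cast hz.symm)
    apply hFxfin.eq_of_subset_of_encard_le hsub
    rw [hx, hm, hmeq]

/-- Merging two distinct infinite classes. -/
lemma merge {E : Set (ℕ × ℕ)} (hE : E ∈ ClassC) {a b : ℕ}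
    (ha : (cls E a).Infinite) (hb : (cls E b).Infinite) (hab : cls E a ≠ cls E b) :
    ∃ F ∈ ClassC, E ⊂ F := by
  classical
  set A : Set ℕ := cls E a ∪ cls E b with hA
  have hclosed : ∀ x ∈ A, cls E x ⊆ A := by
    rintro x (hx | hx)
    · rw [cls_eq_of_mem hE.1 hx]; exact Set.subset_union_left
    · rw [cls_eq_of_mem hE.1 hx]; exact Set.subset_union_right
  refine ⟨E ∪ A ×ˢ A, ⟨?_, ?_⟩, ?_⟩
  · constructor
    · exact fun x => Or.inl (hE.1.refl x)
    · rintro x y (h | ⟨h1, h2⟩)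
      · exact Or.inl (hE.1.symm h)
      · exact Or.inr ⟨h2, h1⟩
    · rintro x y z (h | ⟨h1, h2⟩) (h' | ⟨h1', h2'⟩)
      · exact Or.inl (hE.1.trans h h')
      · exact Or.inr ⟨hclosed y h1' (hE.1.symm h), h2'⟩
      · exact Or.inr ⟨h1, hclosed y h2 h'⟩
      · exact Or.inr ⟨h1, h2'⟩
  · -- the classes
    have hcls : ∀ x : ℕ, {y | (x, y) ∈ E ∪ A ×ˢ A} = if x ∈ A then A else cls E x := by
      intro x
      by_cases hx : x ∈ A
      · rw [if_pos hx]
        ext y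
        simp only [Set.mem_setOf_eq, Set.mem_union, Set.mem_prod]
        exact ⟨fun h => h.elim (fun h => hclosed x hx h) (fun h => h.2),
          fun h => Or.inr ⟨hx, h⟩⟩
      · rw [if_neg hx]
        ext y
        simp only [Set.mem_setOf_eq, Set.mem_union, Set.mem_prod]
        exact ⟨fun h => h.elim id (fun h => absurd h.1 hx), Or.inl⟩
    have hAinf : A.Infinite := ha.mono Set.subset_union_left
    intro n hn
    obtain ⟨x, hx⟩ := exists_cls_encard hE hn
    have hxA : x ∉ A := by
      rintro (hx1 | hx2)
      · rw [cls_eq_of_mem hE.1 hx1, ha.encard_eq] at hx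
        exact absurd hx (by simp)
      · rw [cls_eq_of_mem hE.1 hx2, hb.encard_eq] at hx
        exact absurd hx (by simp)
    refine ⟨cls E x, ⟨⟨x, by rw [hcls x, if_neg hxA]⟩, hx⟩, ?_⟩
    rintro c ⟨⟨y, rfl⟩, hc⟩
    rw [hcls y] at hc ⊢
    by_cases hy : y ∈ A
    · rw [if_pos hy] at hc
      rw [hAinf.encard_eq] at hc
      exact absurd hc (by simp)
    · rw [if_neg hy] at hc ⊢
      exact cls_eq_of_encard_eq hE hn hc hx
  · constructor
    · exact Set.subset_union_left
    · intro hsub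
      have : (a, b) ∈ E ∪ A ×ˢ A :=
        Or.inr ⟨Or.inl (mem_cls_self hE.1 a), Or.inr (mem_cls_self hE.1 b)⟩
      have hmemb := hsub this
      exact hab (cls_eq_of_mem hE.1 hmemb).symm

/-- Splitting an infinite class into two infinite pieces. -/
lemma split {E : Set (ℕ × ℕ)} (hE : E ∈ ClassC) {a : ℕ} (ha : (cls E a).Infinite) :
    ∃ F ∈ ClassC, F ⊂ E := by
  classical
  set A : Set ℕ := cls E a with hA
  -- find `P ⊆ A` with `P` and `A \ P` infinite
  obtain ⟨P, hPA, hPinf, hAPinf⟩ :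
      ∃ P : Set ℕ, P ⊆ A ∧ P.Infinite ∧ (A \ P).Infinite := by
    let f : ℕ ↪ A := ha.natEmbedding
    refine ⟨Set.range (fun k => (f (2 * k) : ℕ)), ?_, ?_, ?_⟩
    · rintro _ ⟨k, rfl⟩; exact (f (2 * k)).2
    · apply Set.infinite_range_of_injective
      intro i j hij
      have := f.injective (Subtype.ext hij)
      omega
    · apply Set.Infinite.mono (s := Set.range (fun k => (f (2 * k + 1) : ℕ)))
      · rintro _ ⟨k, rfl⟩
        refine ⟨(f (2 * k + 1)).2, ?_⟩
        rintro ⟨j, hj⟩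
        have := f.injective (Subtype.ext hj)
        omega
      · apply Set.infinite_range_of_injective
        intro i j hij
        have := f.injective (Subtype.ext hij)
        omega
  set F : Set (ℕ × ℕ) := {p ∈ E | (p.1 ∈ P ↔ p.2 ∈ P)} with hF
  have hFeq : Equivalence fun x y => (x, y) ∈ F := by
    constructor
    · exact fun x => ⟨hE.1.refl x, Iff.rfl⟩
    · exact fun h => ⟨hE.1.symm h.1, h.2.symm⟩
    · exact fun h h' => ⟨hE.1.trans h.1 h'.1, h.2.trans h'.2⟩
  have hdisj : ∀ x : ℕ, x ∉ A → ∀ y ∈ cls E x, y ∉ P := by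
    intro x hx y hy hyP
    apply hx
    have h1 : cls E y = cls E x := cls_eq_of_mem hE.1 hy
    have h2 : cls E y = A := cls_eq_of_mem hE.1 (hPA hyP)
    have hx' : x ∈ cls E x := mem_cls_self hE.1 x
    rw [← h1, h2] at hx'
    exact hx'
  have hcls : ∀ x : ℕ, {y | (x, y) ∈ F} =
      if x ∈ P then P else if x ∈ A then A \ P else cls E x := by
    intro x
    by_cases hxP : x ∈ P
    · rw [if_pos hxP]
      have hxA : x ∈ A := hPA hxP
      have hclsx : cls E x = A := cls_eq_of_mem hE.1 hxA
      ext y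
      simp only [hF, Set.mem_setOf_eq, hxP, true_iff]
      constructor
      · rintro ⟨_, h2⟩; exact h2
      · intro hyP
        exact ⟨by rw [← mem_cls, hclsx]; exact hPA hyP, hyP⟩
    · rw [if_neg hxP]
      by_cases hxA : x ∈ A
      · rw [if_pos hxA]
        have hclsx : cls E x = A := cls_eq_of_mem hE.1 hxA
        ext y
        simp only [hF, Set.mem_setOf_eq, hxP, Set.mem_diff]
        constructor
        · rintro ⟨h1, h2⟩
          exact ⟨hclsx ▸ h1, fun hyP => h2.2 hyP⟩
        · rintro ⟨h1, h2⟩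
          exact ⟨by rw [← mem_cls, hclsx]; exact h1, by simp [hxP, h2]⟩
      · rw [if_neg hxA]
        ext y
        simp only [hF, Set.mem_setOf_eq, hxP]
        constructor
        · rintro ⟨h1, _⟩; exact h1
        · intro h1
          exact ⟨h1, by simp [hxP, hdisj x hxA y h1]⟩
  refine ⟨F, ⟨hFeq, ?_⟩, ?_, ?_⟩
  · intro n hn
    obtain ⟨x, hx⟩ := exists_cls_encard hE hn
    have hxA : x ∉ A := by
      intro hxA
      rw [cls_eq_of_mem hE.1 hxA] at hx
      rw [ha.encard_eq] at hx
      exact absurd hx (by simp)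
    have hxP : x ∉ P := fun h => hxA (hPA h)
    refine ⟨cls E x, ⟨⟨x, by rw [hcls x, if_neg hxP, if_neg hxA]⟩, hx⟩, ?_⟩
    rintro c ⟨⟨y, rfl⟩, hc⟩
    rw [hcls y] at hc ⊢
    by_cases hyP : y ∈ P
    · rw [if_pos hyP] at hc
      rw [hPinf.encard_eq] at hc
      exact absurd hc (by simp)
    · rw [if_neg hyP] at hc ⊢
      by_cases hyA : y ∈ A
      · rw [if_pos hyA] at hc
        rw [hAPinf.encard_eq] at hc
        exact absurd hc (by simp)
      · rw [if_neg hyA] at hc ⊢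
        exact cls_eq_of_encard_eq hE hn hc hx
  · exact fun p hp => hp.1
  · intro hsub
    obtain ⟨p, hp⟩ := hPinf.nonempty
    obtain ⟨q, hqA, hqP⟩ := hAPinf.nonempty
    have hpq : (p, q) ∈ E := by
      have hpA : p ∈ A := hPA hp
      rw [← mem_cls, cls_eq_of_mem hE.1 hpA]
      exact hqA
    have := hsub hpq
    exact hqP (this.2.mp hp)

end Stmt19Aux

open Stmt19Aux in
/-- Let `C` be the set of equivalence relations on `ℕ` having, for each positive `n`,
exactly one class with exactly `n` elements. Then `E ∈ C` is maximal in `(C, ⊆)` iff `E`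
has at most one infinite class, and minimal in `(C, ⊆)` iff `E` has no infinite class. -/
theorem stmt_19 :
    ∀ E ∈ ClassC,
      ((¬∃ F ∈ ClassC, E ⊂ F) ↔
        ∀ x y : ℕ, {z | (x, z) ∈ E}.Infinite → {z | (y, z) ∈ E}.Infinite →
          {z | (x, z) ∈ E} = {z | (y, z) ∈ E}) ∧
      ((¬∃ F ∈ ClassC, F ⊂ E) ↔ ∀ x : ℕ, {z | (x, z) ∈ E}.Finite) := by
  intro E hE
  constructor
  · constructor
    · intro hmax x y hx hy
      by_contra hne
      exact hmax (merge hE hx hy hne)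
    · rintro h ⟨F, hF, hEF⟩
      apply hEF.ne
      apply Set.Subset.antisymm hEF.subset
      rintro ⟨x, y⟩ hxy
      by_cases hfx : (cls E x).Finite
      · obtain ⟨n, hn⟩ := hfx.exists_encard_eq_coe
        have := key_up hE hF hEF.subset n x hn
        rw [← mem_cls, ← this]
        exact hxy
      · by_cases hfy : (cls E y).Finite
        · obtain ⟨n, hn⟩ := hfy.exists_encard_eq_coe
          have := key_up hE hF hEF.subset n y hn
          have hyx : x ∈ cls F y := hF.1.symm hxy
          rw [this] at hyx
          exact hE.1.symm hyx
        · have hthis := h x y hfx hfy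
          have hy' : y ∈ {z | (y, z) ∈ E} := hE.1.refl y
          rw [← hthis] at hy'
          exact hy'
  · constructor
    · intro hmin x
      by_contra hinf
      exact hmin (split hE hinf)
    · rintro h ⟨F, hF, hFE⟩
      apply hFE.ne
      apply Set.Subset.antisymm hFE.subset
      rintro ⟨x, y⟩ hxy
      obtain ⟨n, hn⟩ := (h x).exists_encard_eq_coe
      have hthis := key_down hE hF hFE.subset n x hn
      rw [← mem_cls, hthis]
      exact hxy
end
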